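/- arXiv:1304.0174 — 9 statements merged into one kernel-verified Lean document; each statement's English description precedes it below -/
import Mathlib

section
/- A subset M of the set F of flags is a pencil (of type 0, 1 or 2) if and only if M is a maximal set of mutually related flags, i.e. any two flags of M are related and M is not properly contained in any set of mutually related flags. -/
/-- A flag of a 3-dimensional projective space: a triple `(P, g, ε)` of subspaces of the
underlying 4-dimensional vector space `V` with `finrank P = 1`, `finrank g = 2`,
`finrank ε = 3` and `P ≤ g ≤ ε`. -/
structure ProjFlag (K : Type*) (V : Type*) [DivisionRing K] [AddCommGroup V]
    [Module K V] where
  pt : Submodule K V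
  ln : Submodule K V
  pl : Submodule K V
  finrank_pt : Module.finrank K pt = 1
  finrank_ln : Module.finrank K ln = 2
  finrank_pl : Module.finrank K pl = 3
  pt_le_ln : pt ≤ ln
  ln_le_pl : ln ≤ pl

variable {K V : Type*} [DivisionRing K] [AddCommGroup V] [Module K V]

/-- Two flags are related if they agree in at least two of their three components. -/
def ProjFlag.Related (Φ Ψ : ProjFlag K V) : Prop :=
  (Φ.pt = Ψ.pt ∧ Φ.ln = Ψ.ln) ∨ (Φ.pt = Ψ.pt ∧ Φ.pl = Ψ.pl) ∨ (Φ.ln = Ψ.ln ∧ Φ.pl = Ψ.pl)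

/-- The set `F[g, ε]` of all flags with line component `g` and plane component `ε`. -/
def flagsOfLinePlane (g ε : Submodule K V) : Set (ProjFlag K V) :=
  {Φ : ProjFlag K V | Φ.ln = g ∧ Φ.pl = ε}

/-- The set `F[P, ε]` of all flags with point component `P` and plane component `ε`. -/
def flagsOfPointPlane (P ε : Submodule K V) : Set (ProjFlag K V) :=
  {Φ : ProjFlag K V | Φ.pt = P ∧ Φ.pl = ε}

/-- The set `F[P, g]` of all flags with point component `P` and line component `g`. -/
def flagsOfPointLine (P g : Submodule K V) : Set (ProjFlag K V) :=
  {Φ : ProjFlag K V | Φ.pt = P ∧ Φ.ln = g}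

/-- `M` is a pencil of type 0: `M = F[g, ε]` for a line `g` contained in a plane `ε`. -/
def IsPencil0 (M : Set (ProjFlag K V)) : Prop :=
  ∃ g ε : Submodule K V, Module.finrank K g = 2 ∧ Module.finrank K ε = 3 ∧ g ≤ ε ∧
    M = flagsOfLinePlane g ε

/-- `M` is a pencil of type 1: `M = F[P, ε]` for a point `P` contained in a plane `ε`. -/
def IsPencil1 (M : Set (ProjFlag K V)) : Prop :=
  ∃ P ε : Submodule K V, Module.finrank K P = 1 ∧ Module.finrank K ε = 3 ∧ P ≤ ε ∧
    M = flagsOfPointPlane P ε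

/-- `M` is a pencil of type 2: `M = F[P, g]` for a point `P` contained in a line `g`. -/
def IsPencil2 (M : Set (ProjFlag K V)) : Prop :=
  ∃ P g : Submodule K V, Module.finrank K P = 1 ∧ Module.finrank K g = 2 ∧ P ≤ g ∧
    M = flagsOfPointLine P g

/-- `M` is a pencil (of type 0, 1 or 2). -/
def IsPencil (M : Set (ProjFlag K V)) : Prop :=
  IsPencil0 M ∨ IsPencil1 M ∨ IsPencil2 M

open Module Submodule

/-- extensionality for flags -/
lemma ProjFlag.ext' {Φ Ψ : ProjFlag K V} (h1 : Φ.pt = Ψ.pt) (h2 : Φ.ln = Ψ.ln)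
    (h3 : Φ.pl = Ψ.pl) : Φ = Ψ := by
  cases Φ; cases Ψ; simp_all

lemma step_exists [FiniteDimensional K V] (A B : Submodule K V) (hAB : A ≤ B)
    (h : finrank K A < finrank K B) :
    ∃ C : Submodule K V, A ≤ C ∧ C ≤ B ∧ finrank K C = finrank K A + 1 := by
  have hne : A ≠ B := fun h' => absurd h (by rw [h']; exact lt_irrefl _)
  obtain ⟨u, huB, huA⟩ := SetLike.exists_of_lt (lt_of_le_of_ne hAB hne)
  have hu0 : u ≠ 0 := fun h' => huA (h' ▸ A.zero_mem)
  have hinf : A ⊓ (K ∙ u) = ⊥ := by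
    rw [eq_bot_iff]
    intro x hx
    rw [Submodule.mem_inf] at hx
    obtain ⟨hxA, hxu⟩ := hx
    rw [Submodule.mem_span_singleton] at hxu
    obtain ⟨c, rfl⟩ := hxu
    rcases eq_or_ne c 0 with rfl | hc
    · simp
    · exact absurd (by simpa [smul_smul, inv_mul_cancel₀ hc] using A.smul_mem c⁻¹ hxA) huA
  refine ⟨A ⊔ K ∙ u, le_sup_left, sup_le hAB (by rwa [Submodule.span_singleton_le_iff_mem]), ?_⟩
  have := Submodule.finrank_sup_add_finrank_inf_eq A (K ∙ u)
  rw [hinf, finrank_span_singleton hu0] at this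
  simpa using this

/-- two distinct intermediates, when the gap is 2 -/
lemma two_step_exists [FiniteDimensional K V] (A B : Submodule K V) (hAB : A ≤ B)
    (h : finrank K B = finrank K A + 2) :
    ∃ C₁ C₂ : Submodule K V, C₁ ≠ C₂ ∧ A ≤ C₁ ∧ C₁ ≤ B ∧ A ≤ C₂ ∧ C₂ ≤ B ∧
      finrank K C₁ = finrank K A + 1 ∧ finrank K C₂ = finrank K A + 1 := by
  obtain ⟨C₁, hAC, hCB, hC⟩ := step_exists A B hAB (by omega)
  have hne : C₁ ≠ B := fun h' => by rw [h'] at hC; omega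
  obtain ⟨u, huB, huC⟩ := SetLike.exists_of_lt (lt_of_le_of_ne hCB hne)
  have huA : u ∉ A := fun h' => huC (hAC h')
  have hu0 : u ≠ 0 := fun h' => huA (h' ▸ A.zero_mem)
  have hinf : A ⊓ (K ∙ u) = ⊥ := by
    rw [eq_bot_iff]
    intro x hx
    rw [Submodule.mem_inf] at hx
    obtain ⟨hxA, hxu⟩ := hx
    rw [Submodule.mem_span_singleton] at hxu
    obtain ⟨c, rfl⟩ := hxu
    rcases eq_or_ne c 0 with rfl | hc
    · simp
    · exact absurd (by simpa [smul_smul, inv_mul_cancel₀ hc] using A.smul_mem c⁻¹ hxA) huA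
  refine ⟨C₁, A ⊔ K ∙ u, ?_, hAC, hCB, le_sup_left,
    sup_le hAB (by rwa [Submodule.span_singleton_le_iff_mem]), hC, ?_⟩
  · intro h'
    exact huC (h' ▸ (le_sup_right : (K ∙ u) ≤ A ⊔ K ∙ u) (Submodule.mem_span_singleton_self u))
  · have := Submodule.finrank_sup_add_finrank_inf_eq A (K ∙ u)
    rw [hinf, finrank_span_singleton hu0] at this
    simpa using this

/-- each pencil type contains two distinct flags -/
lemma pencil0_two (g ε : Submodule K V) (hg : finrank K g = 2) (hε : finrank K ε = 3)
    (hge : g ≤ ε) [FiniteDimensional K V] :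
    ∃ Φ₁ Φ₂ : ProjFlag K V, Φ₁ ∈ flagsOfLinePlane g ε ∧ Φ₂ ∈ flagsOfLinePlane g ε ∧
      Φ₁.pt ≠ Φ₂.pt := by
  obtain ⟨P₁, P₂, hne, _, h1g, _, h2g, h1, h2⟩ :=
    two_step_exists (⊥ : Submodule K V) g bot_le (by simp [hg])
  simp only [finrank_bot] at h1 h2
  exact ⟨⟨P₁, g, ε, h1, hg, hε, h1g, hge⟩, ⟨P₂, g, ε, h2, hg, hε, h2g, hge⟩,
    ⟨rfl, rfl⟩, ⟨rfl, rfl⟩, hne⟩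

lemma pencil1_two (P ε : Submodule K V) (hP : finrank K P = 1) (hε : finrank K ε = 3)
    (hPe : P ≤ ε) [FiniteDimensional K V] :
    ∃ Φ₁ Φ₂ : ProjFlag K V, Φ₁ ∈ flagsOfPointPlane P ε ∧ Φ₂ ∈ flagsOfPointPlane P ε ∧
      Φ₁.ln ≠ Φ₂.ln := by
  obtain ⟨g₁, g₂, hne, hP1, h1e, hP2, h2e, h1, h2⟩ :=
    two_step_exists P ε hPe (by omega)
  rw [hP] at h1 h2
  exact ⟨⟨P, g₁, ε, hP, h1, hε, hP1, h1e⟩, ⟨P, g₂, ε, hP, h2, hε, hP2, h2e⟩,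
    ⟨rfl, rfl⟩, ⟨rfl, rfl⟩, hne⟩

lemma pencil2_two (P g : Submodule K V) (hP : finrank K P = 1) (hg : finrank K g = 2)
    (hPg : P ≤ g) [FiniteDimensional K V] (hV : finrank K V = 4) :
    ∃ Φ₁ Φ₂ : ProjFlag K V, Φ₁ ∈ flagsOfPointLine P g ∧ Φ₂ ∈ flagsOfPointLine P g ∧
      Φ₁.pl ≠ Φ₂.pl := by
  obtain ⟨ε₁, ε₂, hne, hg1, _, hg2, _, h1, h2⟩ :=
    two_step_exists g ⊤ le_top (by rw [finrank_top, hV, hg])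
  rw [hg] at h1 h2
  exact ⟨⟨P, g, ε₁, hP, hg, h1, hPg, hg1⟩, ⟨P, g, ε₂, hP, hg, h2, hPg, hg2⟩,
    ⟨rfl, rfl⟩, ⟨rfl, rfl⟩, hne⟩

/-- key combinatorial lemmas -/
lemma key0 {Φ₁ Φ₂ Θ : ProjFlag K V} (hln : Φ₁.ln = Φ₂.ln) (hpl : Φ₁.pl = Φ₂.pl)
    (hpt : Φ₁.pt ≠ Φ₂.pt) (h1 : Θ.Related Φ₁) (h2 : Θ.Related Φ₂) :
    Θ.ln = Φ₁.ln ∧ Θ.pl = Φ₁.pl := by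
  unfold ProjFlag.Related at h1 h2
  rcases h1 with ⟨a, b⟩ | ⟨a, b⟩ | ⟨a, b⟩ <;> rcases h2 with ⟨c, d⟩ | ⟨c, d⟩ | ⟨c, d⟩ <;>
    constructor <;> simp_all

lemma key1 {Φ₁ Φ₂ Θ : ProjFlag K V} (hpt : Φ₁.pt = Φ₂.pt) (hpl : Φ₁.pl = Φ₂.pl)
    (hln : Φ₁.ln ≠ Φ₂.ln) (h1 : Θ.Related Φ₁) (h2 : Θ.Related Φ₂) :
    Θ.pt = Φ₁.pt ∧ Θ.pl = Φ₁.pl := by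
  unfold ProjFlag.Related at h1 h2
  rcases h1 with ⟨a, b⟩ | ⟨a, b⟩ | ⟨a, b⟩ <;> rcases h2 with ⟨c, d⟩ | ⟨c, d⟩ | ⟨c, d⟩ <;>
    constructor <;> simp_all

lemma key2 {Φ₁ Φ₂ Θ : ProjFlag K V} (hpt : Φ₁.pt = Φ₂.pt) (hln : Φ₁.ln = Φ₂.ln)
    (hpl : Φ₁.pl ≠ Φ₂.pl) (h1 : Θ.Related Φ₁) (h2 : Θ.Related Φ₂) :
    Θ.pt = Φ₁.pt ∧ Θ.ln = Φ₁.ln := by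
  unfold ProjFlag.Related at h1 h2
  rcases h1 with ⟨a, b⟩ | ⟨a, b⟩ | ⟨a, b⟩ <;> rcases h2 with ⟨c, d⟩ | ⟨c, d⟩ | ⟨c, d⟩ <;>
    constructor <;> simp_all

lemma rel0 {g ε : Submodule K V} : ∀ Φ ∈ flagsOfLinePlane g ε, ∀ Ψ ∈ flagsOfLinePlane g ε,
    Φ.Related Ψ := fun _ hΦ _ hΨ => Or.inr (Or.inr ⟨hΦ.1.trans hΨ.1.symm, hΦ.2.trans hΨ.2.symm⟩)

lemma rel1 {P ε : Submodule K V} : ∀ Φ ∈ flagsOfPointPlane P ε, ∀ Ψ ∈ flagsOfPointPlane P ε,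
    Φ.Related Ψ := fun _ hΦ _ hΨ => Or.inr (Or.inl ⟨hΦ.1.trans hΨ.1.symm, hΦ.2.trans hΨ.2.symm⟩)

lemma rel2 {P g : Submodule K V} : ∀ Φ ∈ flagsOfPointLine P g, ∀ Ψ ∈ flagsOfPointLine P g,
    Φ.Related Ψ := fun _ hΦ _ hΨ => Or.inl ⟨hΦ.1.trans hΨ.1.symm, hΦ.2.trans hΨ.2.symm⟩


/-- **Proposition 1.** The pencils of flags are exactly the maximal sets of mutually
related flags. -/
theorem isPencil_iff_maximal_mutually_related
    (hV : Module.finrank K V = 4) (M : Set (ProjFlag K V)) :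
    IsPencil M ↔
      ((∀ Φ ∈ M, ∀ Ψ ∈ M, Φ.Related Ψ) ∧
        ∀ M' : Set (ProjFlag K V), (∀ Φ ∈ M', ∀ Ψ ∈ M', Φ.Related Ψ) → M ⊆ M' → M' = M) := by
  have : FiniteDimensional K V := FiniteDimensional.of_finrank_pos (by omega)
  constructor
  · rintro (⟨g, ε, hg, hε, hge, rfl⟩ | ⟨P, ε, hP, hε, hPe, rfl⟩ | ⟨P, g, hP, hg, hPg, rfl⟩)
    · refine ⟨rel0, fun M' hM' hsub => Set.Subset.antisymm (fun Θ hΘ => ?_) hsub⟩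
      obtain ⟨Φ₁, Φ₂, h1, h2, hne⟩ := pencil0_two g ε hg hε hge
      obtain ⟨hl, hp⟩ := key0 (h1.1.trans h2.1.symm) (h1.2.trans h2.2.symm) hne
        (hM' Θ hΘ Φ₁ (hsub h1)) (hM' Θ hΘ Φ₂ (hsub h2))
      exact ⟨hl.trans h1.1, hp.trans h1.2⟩
    · refine ⟨rel1, fun M' hM' hsub => Set.Subset.antisymm (fun Θ hΘ => ?_) hsub⟩
      obtain ⟨Φ₁, Φ₂, h1, h2, hne⟩ := pencil1_two P ε hP hε hPe
      obtain ⟨hl, hp⟩ := key1 (h1.1.trans h2.1.symm) (h1.2.trans h2.2.symm) hne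
        (hM' Θ hΘ Φ₁ (hsub h1)) (hM' Θ hΘ Φ₂ (hsub h2))
      exact ⟨hl.trans h1.1, hp.trans h1.2⟩
    · refine ⟨rel2, fun M' hM' hsub => Set.Subset.antisymm (fun Θ hΘ => ?_) hsub⟩
      obtain ⟨Φ₁, Φ₂, h1, h2, hne⟩ := pencil2_two P g hP hg hPg hV
      obtain ⟨hl, hp⟩ := key2 (h1.1.trans h2.1.symm) (h1.2.trans h2.2.symm) hne
        (hM' Θ hΘ Φ₁ (hsub h1)) (hM' Θ hΘ Φ₂ (hsub h2))
      exact ⟨hl.trans h1.1, hp.trans h1.2⟩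
  · rintro ⟨hrel, hmax⟩
    -- there exists a flag
    obtain ⟨P₀, _, hP₀top, hP₀⟩ := step_exists (⊥ : Submodule K V) ⊤ bot_le
      (by rw [finrank_bot, finrank_top, hV]; omega)
    rw [finrank_bot] at hP₀
    obtain ⟨g₀, hPg₀, hg₀top, hg₀⟩ := step_exists P₀ ⊤ le_top
      (by rw [finrank_top, hV, hP₀]; omega)
    rw [hP₀] at hg₀
    obtain ⟨ε₀, hge₀, _, hε₀⟩ := step_exists g₀ ⊤ le_top
      (by rw [finrank_top, hV, hg₀]; omega)
    rw [hg₀] at hε₀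
    set Φ₀ : ProjFlag K V := ⟨P₀, g₀, ε₀, hP₀, hg₀, hε₀, hPg₀, hge₀⟩ with hΦ₀
    -- M is nonempty
    by_cases hM : M = ∅
    · exfalso
      have := hmax (flagsOfLinePlane g₀ ε₀) rel0 (by simp [hM])
      rw [hM] at this
      exact absurd this (by
        intro h
        have : Φ₀ ∈ (∅ : Set (ProjFlag K V)) := h ▸ (⟨rfl, rfl⟩ : Φ₀ ∈ flagsOfLinePlane g₀ ε₀)
        exact this)
    obtain ⟨Φ, hΦ⟩ := Set.nonempty_iff_ne_empty.mpr hM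
    by_cases hsing : ∀ Ψ ∈ M, Ψ = Φ
    · exfalso
      have hsub : M ⊆ flagsOfLinePlane Φ.ln Φ.pl := by
        intro Ψ hΨ; rw [hsing Ψ hΨ]; exact ⟨rfl, rfl⟩
      have heq := hmax _ rel0 hsub
      obtain ⟨Φ₁, Φ₂, h1, h2, hne⟩ := pencil0_two Φ.ln Φ.pl Φ.finrank_ln Φ.finrank_pl Φ.ln_le_pl
      rw [heq] at h1 h2
      exact hne (by rw [hsing Φ₁ h1, hsing Φ₂ h2])
    push_neg at hsing
    obtain ⟨Ψ, hΨ, hΨΦ⟩ := hsing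
    have hrelΦΨ := hrel Φ hΦ Ψ hΨ
    rcases hrelΦΨ with ⟨hpt, hln⟩ | ⟨hpt, hpl⟩ | ⟨hln, hpl⟩
    · -- pt, ln equal, pl differ : type 2
      have hpl : Φ.pl ≠ Ψ.pl := fun h => hΨΦ (ProjFlag.ext' hpt.symm hln.symm h.symm)
      have hsub : M ⊆ flagsOfPointLine Φ.pt Φ.ln := by
        intro Θ hΘ
        exact key2 hpt hln hpl (hrel Θ hΘ Φ hΦ) (hrel Θ hΘ Ψ hΨ)
      exact Or.inr (Or.inr ⟨Φ.pt, Φ.ln, Φ.finrank_pt, Φ.finrank_ln, Φ.pt_le_ln,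
        (hmax _ rel2 hsub).symm⟩)
    · -- pt, pl equal, ln differ : type 1
      have hln : Φ.ln ≠ Ψ.ln := fun h => hΨΦ (ProjFlag.ext' hpt.symm h.symm hpl.symm)
      have hsub : M ⊆ flagsOfPointPlane Φ.pt Φ.pl := by
        intro Θ hΘ
        exact key1 hpt hpl hln (hrel Θ hΘ Φ hΦ) (hrel Θ hΘ Ψ hΨ)
      exact Or.inr (Or.inl ⟨Φ.pt, Φ.pl, Φ.finrank_pt, Φ.finrank_pl,
        le_trans Φ.pt_le_ln Φ.ln_le_pl, (hmax _ rel1 hsub).symm⟩)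
    · -- ln, pl equal, pt differ : type 0
      have hpt : Φ.pt ≠ Ψ.pt := fun h => hΨΦ (ProjFlag.ext' h.symm hln.symm hpl.symm)
      have hsub : M ⊆ flagsOfLinePlane Φ.ln Φ.pl := by
        intro Θ hΘ
        exact key0 hln hpl hpt (hrel Θ hΘ Φ hΦ) (hrel Θ hΘ Ψ hΨ)
      exact Or.inl ⟨Φ.ln, Φ.pl, Φ.finrank_ln, Φ.finrank_pl, Φ.ln_le_pl,
        (hmax _ rel0 hsub).symm⟩
end

section
/- Let α : F → F be a Plücker transformation. Then there exists a bijection β of the set of lines of V (the 2-dimensional K-subspaces of V) onto itself such that for every line g, the image under α of the set F[g] of all flags with line component g equals F[β(g)]. -/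
variable {K V : Type*} [DivisionRing K] [AddCommGroup V] [Module K V]

/-- The set `F[g]` of all flags with line component `g`. -/
def flagsOfLine (g : Submodule K V) : Set (ProjFlag K V) :=
  {Φ : ProjFlag K V | Φ.ln = g}

open Module Submodule

lemma mem_fLP {g ε : Submodule K V} {Φ : ProjFlag K V} :
    Φ ∈ flagsOfLinePlane g ε ↔ Φ.ln = g ∧ Φ.pl = ε := Iff.rfl

lemma mem_fPP {P ε : Submodule K V} {Φ : ProjFlag K V} :
    Φ ∈ flagsOfPointPlane P ε ↔ Φ.pt = P ∧ Φ.pl = ε := Iff.rfl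

lemma mem_fPL {P g : Submodule K V} {Φ : ProjFlag K V} :
    Φ ∈ flagsOfPointLine P g ↔ Φ.pt = P ∧ Φ.ln = g := Iff.rfl

/-! common neighbours -/

def ComN (Φ Ψ : ProjFlag K V) : Set (ProjFlag K V) := {Ω | Ω.Related Φ ∧ Ω.Related Ψ}

lemma comN_eq_fPL {Φ Ψ : ProjFlag K V} (hpt : Φ.pt = Ψ.pt) (hln : Φ.ln = Ψ.ln)
    (hpl : Φ.pl ≠ Ψ.pl) : ComN Φ Ψ = flagsOfPointLine Φ.pt Φ.ln := by
  ext Ω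
  simp only [ComN, ProjFlag.Related, flagsOfPointLine, Set.mem_setOf_eq]
  constructor
  · rintro ⟨(⟨e1, e2⟩ | ⟨e1, e2⟩ | ⟨e1, e2⟩), (⟨f1, f2⟩ | ⟨f1, f2⟩ | ⟨f1, f2⟩)⟩ <;>
      first
        | exact ⟨e1, e2⟩
        | exact ⟨f1.trans hpt.symm, f2.trans hln.symm⟩
        | exact absurd (e2.symm.trans f2) hpl
  · rintro ⟨h1, h2⟩
    exact ⟨Or.inl ⟨h1, h2⟩, Or.inl ⟨h1.trans hpt, h2.trans hln⟩⟩

lemma comN_eq_fPP {Φ Ψ : ProjFlag K V} (hpt : Φ.pt = Ψ.pt) (hpl : Φ.pl = Ψ.pl)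
    (hln : Φ.ln ≠ Ψ.ln) : ComN Φ Ψ = flagsOfPointPlane Φ.pt Φ.pl := by
  ext Ω
  simp only [ComN, ProjFlag.Related, flagsOfPointPlane, Set.mem_setOf_eq]
  constructor
  · rintro ⟨(⟨e1, e2⟩ | ⟨e1, e2⟩ | ⟨e1, e2⟩), (⟨f1, f2⟩ | ⟨f1, f2⟩ | ⟨f1, f2⟩)⟩ <;>
      first
        | exact ⟨e1, e2⟩
        | exact ⟨f1.trans hpt.symm, f2.trans hpl.symm⟩
        | exact absurd (e2.symm.trans f2) hln
        | exact absurd (e2.symm.trans f1) hln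
        | exact absurd (e1.symm.trans f2) hln
        | exact absurd (e1.symm.trans f1) hln
  · rintro ⟨h1, h2⟩
    exact ⟨Or.inr (Or.inl ⟨h1, h2⟩), Or.inr (Or.inl ⟨h1.trans hpt, h2.trans hpl⟩)⟩

lemma comN_eq_fLP {Φ Ψ : ProjFlag K V} (hln : Φ.ln = Ψ.ln) (hpl : Φ.pl = Ψ.pl)
    (hpt : Φ.pt ≠ Ψ.pt) : ComN Φ Ψ = flagsOfLinePlane Φ.ln Φ.pl := by
  ext Ω
  simp only [ComN, ProjFlag.Related, flagsOfLinePlane, Set.mem_setOf_eq]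
  constructor
  · rintro ⟨(⟨e1, e2⟩ | ⟨e1, e2⟩ | ⟨e1, e2⟩), (⟨f1, f2⟩ | ⟨f1, f2⟩ | ⟨f1, f2⟩)⟩ <;>
      first
        | exact ⟨e1, e2⟩
        | exact ⟨f1.trans hln.symm, f2.trans hpl.symm⟩
        | exact absurd (e1.symm.trans f1) hpt
  · rintro ⟨h1, h2⟩
    exact ⟨Or.inr (Or.inr ⟨h1, h2⟩), Or.inr (Or.inr ⟨h1.trans hln, h2.trans hpl⟩)⟩

lemma comN_isPencil {Φ Ψ : ProjFlag K V} (hne : Φ ≠ Ψ) (hrel : Φ.Related Ψ) :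
    IsPencil (ComN Φ Ψ) := by
  rcases hrel with ⟨h1, h2⟩ | ⟨h1, h2⟩ | ⟨h1, h2⟩
  · have hpl : Φ.pl ≠ Ψ.pl := fun h => hne (ProjFlag.ext' h1 h2 h)
    exact Or.inr (Or.inr ⟨Φ.pt, Φ.ln, Φ.finrank_pt, Φ.finrank_ln, Φ.pt_le_ln,
      (comN_eq_fPL h1 h2 hpl).symm ▸ rfl⟩)
  · have hln : Φ.ln ≠ Ψ.ln := fun h => hne (ProjFlag.ext' h1 h h2)
    exact Or.inr (Or.inl ⟨Φ.pt, Φ.pl, Φ.finrank_pt, Φ.finrank_pl,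
      Φ.pt_le_ln.trans Φ.ln_le_pl, (comN_eq_fPP h1 h2 hln).symm ▸ rfl⟩)
  · have hpt : Φ.pt ≠ Ψ.pt := fun h => hne (ProjFlag.ext' h h1 h2)
    exact Or.inl ⟨Φ.ln, Φ.pl, Φ.finrank_ln, Φ.finrank_pl, Φ.ln_le_pl,
      (comN_eq_fLP h1 h2 hpt).symm ▸ rfl⟩

open Module Submodule

section LinAlg
variable {K V : Type*} [DivisionRing K] [AddCommGroup V] [Module K V] [FiniteDimensional K V]

lemma aux_sup_span_rank {A : Submodule K V} {x : V} (hx : x ∉ A) :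
    finrank K ↥(A ⊔ K ∙ x) = finrank K A + 1 := by
  have hx0 : x ≠ 0 := by rintro rfl; exact hx A.zero_mem
  have h1 : A < A ⊔ K ∙ x := lt_of_le_of_ne le_sup_left (by
    intro h
    have : x ∈ A ⊔ K ∙ x := (le_sup_right : (K ∙ x) ≤ _) (mem_span_singleton_self x)
    rw [← h] at this; exact hx this)
  have h2 : finrank K ↥A < finrank K ↥(A ⊔ K ∙ x) := finrank_lt_finrank_of_lt h1
  have h3 : finrank K ↥(A ⊔ K ∙ x) ≤ finrank K A + finrank K ↥(K ∙ x) :=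
    Submodule.finrank_add_le_finrank_add_finrank _ _
  rw [finrank_span_singleton hx0] at h3
  omega

lemma exists_between_rank {A B : Submodule K V} (hAB : A ≤ B)
    (h : finrank K A < finrank K B) :
    ∃ C, A ≤ C ∧ C ≤ B ∧ finrank K C = finrank K A + 1 := by
  have hne : A ≠ B := by rintro rfl; exact lt_irrefl _ h
  obtain ⟨x, hxB, hxA⟩ := SetLike.exists_of_lt (lt_of_le_of_ne hAB hne)
  exact ⟨A ⊔ K ∙ x, le_sup_left, sup_le hAB ((span_singleton_le_iff_mem x B).mpr hxB),
    aux_sup_span_rank hxA⟩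

lemma exists_two_between_rank {A B : Submodule K V} (hAB : A ≤ B)
    (h : finrank K A + 2 ≤ finrank K B) :
    ∃ C₁ C₂, C₁ ≠ C₂ ∧ (A ≤ C₁ ∧ C₁ ≤ B ∧ finrank K C₁ = finrank K A + 1) ∧
      (A ≤ C₂ ∧ C₂ ≤ B ∧ finrank K C₂ = finrank K A + 1) := by
  obtain ⟨C₁, hAC, hCB, hC⟩ := exists_between_rank hAB (by omega)
  have hne : C₁ ≠ B := by rintro rfl; omega
  obtain ⟨y, hyB, hyC⟩ := SetLike.exists_of_lt (lt_of_le_of_ne hCB hne)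
  have hyA : y ∉ A := fun hy => hyC (hAC hy)
  refine ⟨C₁, A ⊔ K ∙ y, ?_, ⟨hAC, hCB, hC⟩,
    le_sup_left, sup_le hAB ((span_singleton_le_iff_mem y B).mpr hyB), aux_sup_span_rank hyA⟩
  intro hEq
  exact hyC (hEq ▸ ((le_sup_right : (K ∙ y) ≤ _) (mem_span_singleton_self y)))

lemma point_unique {P P' X : Submodule K V} (hP : finrank K P = 1) (hP' : finrank K P' = 1)
    (h1 : P ≤ X) (h2 : P' ≤ X) (hX : finrank K X ≤ 1) : P = P' := by
  have e1 : P = X := Submodule.eq_of_le_of_finrank_le h1 (by omega)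
  have e2 : P' = X := Submodule.eq_of_le_of_finrank_le h2 (by omega)
  rw [e1, e2]

lemma lines_inf_rank {h₁ h₂ : Submodule K V} (hne : h₁ ≠ h₂)
    (hr1 : finrank K h₁ = 2) (hr2 : finrank K h₂ = 2) : finrank K ↥(h₁ ⊓ h₂) ≤ 1 := by
  have hlt : h₁ ⊓ h₂ < h₁ := by
    refine lt_of_le_of_ne inf_le_left (fun hEq => hne ?_)
    exact Submodule.eq_of_le_of_finrank_le (hEq ▸ (inf_le_right : h₁ ⊓ h₂ ≤ h₂)) (by omega)
  have := Submodule.finrank_lt_finrank_of_lt hlt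
  omega

lemma lines_sup_eq {h₁ h₂ ε : Submodule K V} (hne : h₁ ≠ h₂)
    (hr1 : finrank K h₁ = 2) (hr2 : finrank K h₂ = 2)
    (hε : finrank K ε = 3) (hl1 : h₁ ≤ ε) (hl2 : h₂ ≤ ε) : h₁ ⊔ h₂ = ε := by
  have key := Submodule.finrank_sup_add_finrank_inf_eq h₁ h₂
  have := lines_inf_rank hne hr1 hr2
  exact Submodule.eq_of_le_of_finrank_le (sup_le hl1 hl2) (by omega)

lemma points_sup_eq {P₁ P₂ g : Submodule K V} (hne : P₁ ≠ P₂)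
    (hr1 : finrank K P₁ = 1) (hr2 : finrank K P₂ = 1)
    (hg : finrank K g = 2) (hl1 : P₁ ≤ g) (hl2 : P₂ ≤ g) : P₁ ⊔ P₂ = g := by
  have key := Submodule.finrank_sup_add_finrank_inf_eq P₁ P₂
  have hlt : P₁ ⊓ P₂ < P₁ := by
    refine lt_of_le_of_ne inf_le_left (fun hEq => hne ?_)
    exact Submodule.eq_of_le_of_finrank_le (hEq ▸ (inf_le_right : P₁ ⊓ P₂ ≤ P₂)) (by omega)
  have := Submodule.finrank_lt_finrank_of_lt hlt
  exact Submodule.eq_of_le_of_finrank_le (sup_le hl1 hl2) (by omega)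

lemma planes_inf_rank {ε₁ ε₂ : Submodule K V} (hV : finrank K V = 4) (hne : ε₁ ≠ ε₂)
    (hr1 : finrank K ε₁ = 3) (hr2 : finrank K ε₂ = 3) : finrank K ↥(ε₁ ⊓ ε₂) = 2 := by
  have key := Submodule.finrank_sup_add_finrank_inf_eq ε₁ ε₂
  have hlt : ε₁ < ε₁ ⊔ ε₂ := by
    refine lt_of_le_of_ne le_sup_left (fun hEq => hne ?_)
    exact (Submodule.eq_of_le_of_finrank_le (le_sup_right.trans hEq.ge : ε₂ ≤ ε₁) (by omega)).symm
  have h4 := Submodule.finrank_lt_finrank_of_lt hlt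
  have h5 : finrank K ↥(ε₁ ⊔ ε₂) ≤ finrank K V := Submodule.finrank_le _
  omega

end LinAlg

section Geo
variable [FiniteDimensional K V]

lemma exists_point_le {g : Submodule K V} (hg : finrank K g = 2) :
    ∃ Q : Submodule K V, finrank K Q = 1 ∧ Q ≤ g := by
  obtain ⟨C, -, hCg, hC⟩ := exists_between_rank (bot_le : (⊥ : Submodule K V) ≤ g)
    (by rw [finrank_bot]; omega)
  exact ⟨C, by rw [hC, finrank_bot], hCg⟩

lemma exists_two_points {g : Submodule K V} (hg : finrank K g = 2) :
    ∃ Q₁ Q₂ : Submodule K V, Q₁ ≠ Q₂ ∧ (finrank K Q₁ = 1 ∧ Q₁ ≤ g) ∧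
      (finrank K Q₂ = 1 ∧ Q₂ ≤ g) := by
  obtain ⟨C₁, C₂, hne, ⟨-, h1, r1⟩, ⟨-, h2, r2⟩⟩ :=
    exists_two_between_rank (bot_le : (⊥ : Submodule K V) ≤ g) (by rw [finrank_bot]; omega)
  exact ⟨C₁, C₂, hne, ⟨by rw [r1, finrank_bot], h1⟩, ⟨by rw [r2, finrank_bot], h2⟩⟩

lemma exists_point_ne {g : Submodule K V} (hg : finrank K g = 2) (P₀ : Submodule K V) :
    ∃ Q : Submodule K V, finrank K Q = 1 ∧ Q ≤ g ∧ Q ≠ P₀ := by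
  obtain ⟨Q₁, Q₂, hne, ⟨r1, h1⟩, ⟨r2, h2⟩⟩ := exists_two_points hg
  by_cases h : Q₁ = P₀
  · exact ⟨Q₂, r2, h2, fun hh => hne (h.trans hh.symm)⟩
  · exact ⟨Q₁, r1, h1, h⟩

lemma exists_point_avoid_line {g g₂ : Submodule K V} (hg : finrank K g = 2)
    (hg₂ : finrank K g₂ = 2) (hne : g ≠ g₂) :
    ∃ Q : Submodule K V, finrank K Q = 1 ∧ Q ≤ g ∧ ¬ Q ≤ g₂ := by
  by_contra hcon
  push_neg at hcon
  obtain ⟨Q₁, Q₂, hqne, ⟨r1, h1⟩, ⟨r2, h2⟩⟩ := exists_two_points hg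
  have e : Q₁ ⊔ Q₂ = g := points_sup_eq hqne r1 r2 hg h1 h2
  have : g ≤ g₂ := e ▸ sup_le (hcon Q₁ r1 h1) (hcon Q₂ r2 h2)
  exact hne (Submodule.eq_of_le_of_finrank_le this (by omega))

lemma exists_two_lines {P ε : Submodule K V} (hP : finrank K P = 1)
    (hε : finrank K ε = 3) (hPε : P ≤ ε) :
    ∃ h₁ h₂ : Submodule K V, h₁ ≠ h₂ ∧ (finrank K h₁ = 2 ∧ P ≤ h₁ ∧ h₁ ≤ ε) ∧
      (finrank K h₂ = 2 ∧ P ≤ h₂ ∧ h₂ ≤ ε) := by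
  obtain ⟨C₁, C₂, hne, ⟨a1, b1, r1⟩, ⟨a2, b2, r2⟩⟩ := exists_two_between_rank hPε
    (by rw [hP, hε])
  exact ⟨C₁, C₂, hne, ⟨by rw [r1, hP], a1, b1⟩, ⟨by rw [r2, hP], a2, b2⟩⟩

lemma exists_line_ne {P ε : Submodule K V} (hP : finrank K P = 1)
    (hε : finrank K ε = 3) (hPε : P ≤ ε) (g₀ : Submodule K V) :
    ∃ h : Submodule K V, finrank K h = 2 ∧ P ≤ h ∧ h ≤ ε ∧ h ≠ g₀ := by
  obtain ⟨h₁, h₂, hne, ⟨r1, a1, b1⟩, ⟨r2, a2, b2⟩⟩ := exists_two_lines hP hε hPε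
  by_cases h : h₁ = g₀
  · exact ⟨h₂, r2, a2, b2, fun hh => hne (h.trans hh.symm)⟩
  · exact ⟨h₁, r1, a1, b1, h⟩

lemma exists_line_avoid_point {P P' ε : Submodule K V} (hP : finrank K P = 1)
    (hP' : finrank K P' = 1) (hne : P ≠ P') (hε : finrank K ε = 3) (hPε : P ≤ ε) :
    ∃ h : Submodule K V, finrank K h = 2 ∧ P ≤ h ∧ h ≤ ε ∧ ¬ P' ≤ h := by
  by_contra hcon
  push_neg at hcon
  obtain ⟨h₁, h₂, hhne, ⟨r1, a1, b1⟩, ⟨r2, a2, b2⟩⟩ := exists_two_lines hP hε hPε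
  exact hne (point_unique hP hP' (le_inf a1 a2)
    (le_inf (hcon h₁ r1 a1 b1) (hcon h₂ r2 a2 b2)) (lines_inf_rank hhne r1 r2))

lemma exists_line_avoid_plane {P ε ε' : Submodule K V} (hP : finrank K P = 1)
    (hε : finrank K ε = 3) (hε' : finrank K ε' = 3) (hne : ε ≠ ε') (hPε : P ≤ ε) :
    ∃ h : Submodule K V, finrank K h = 2 ∧ P ≤ h ∧ h ≤ ε ∧ ¬ h ≤ ε' := by
  by_contra hcon
  push_neg at hcon
  obtain ⟨h₁, h₂, hhne, ⟨r1, a1, b1⟩, ⟨r2, a2, b2⟩⟩ := exists_two_lines hP hε hPε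
  have e : h₁ ⊔ h₂ = ε := lines_sup_eq hhne r1 r2 hε b1 b2
  have : ε ≤ ε' := e ▸ sup_le (hcon h₁ r1 a1 b1) (hcon h₂ r2 a2 b2)
  exact hne (Submodule.eq_of_le_of_finrank_le this (by omega))

lemma exists_two_planes (hV : finrank K V = 4) {g : Submodule K V} (hg : finrank K g = 2) :
    ∃ ε₁ ε₂ : Submodule K V, ε₁ ≠ ε₂ ∧ (finrank K ε₁ = 3 ∧ g ≤ ε₁) ∧
      (finrank K ε₂ = 3 ∧ g ≤ ε₂) := by
  obtain ⟨C₁, C₂, hne, ⟨a1, -, r1⟩, ⟨a2, -, r2⟩⟩ := exists_two_between_rank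
    (le_top : g ≤ (⊤ : Submodule K V)) (by rw [finrank_top]; omega)
  exact ⟨C₁, C₂, hne, ⟨by rw [r1, hg], a1⟩, ⟨by rw [r2, hg], a2⟩⟩

lemma exists_plane_over (hV : finrank K V = 4) {g : Submodule K V} (hg : finrank K g = 2) :
    ∃ ε : Submodule K V, finrank K ε = 3 ∧ g ≤ ε := by
  obtain ⟨ε₁, _, _, ⟨r1, a1⟩, _⟩ := exists_two_planes hV hg
  exact ⟨ε₁, r1, a1⟩

lemma exists_plane_ne (hV : finrank K V = 4) {g : Submodule K V} (hg : finrank K g = 2)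
    (ε₀ : Submodule K V) :
    ∃ ε : Submodule K V, finrank K ε = 3 ∧ g ≤ ε ∧ ε ≠ ε₀ := by
  obtain ⟨ε₁, ε₂, hne, ⟨r1, a1⟩, ⟨r2, a2⟩⟩ := exists_two_planes hV hg
  by_cases h : ε₁ = ε₀
  · exact ⟨ε₂, r2, a2, fun hh => hne (h.trans hh.symm)⟩
  · exact ⟨ε₁, r1, a1, h⟩

lemma exists_plane_avoid_line (hV : finrank K V = 4) {g g₂ : Submodule K V}
    (hg : finrank K g = 2) (hg₂ : finrank K g₂ = 2) (hne : g ≠ g₂) :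
    ∃ ε : Submodule K V, finrank K ε = 3 ∧ g ≤ ε ∧ ¬ g₂ ≤ ε := by
  by_contra hcon
  push_neg at hcon
  obtain ⟨ε₁, ε₂, hene, ⟨r1, a1⟩, ⟨r2, a2⟩⟩ := exists_two_planes hV hg
  have hinf : finrank K ↥(ε₁ ⊓ ε₂) = 2 := planes_inf_rank hV hene r1 r2
  have e : ε₁ ⊓ ε₂ = g :=
    (Submodule.eq_of_le_of_finrank_le (le_inf a1 a2) (by omega)).symm
  have : g₂ ≤ g := e ▸ le_inf (hcon ε₁ r1 a1) (hcon ε₂ r2 a2)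
  exact hne.symm (Submodule.eq_of_le_of_finrank_le this (by omega))

end Geo

section Pencils
variable [FiniteDimensional K V]

def Par (M N : Set (ProjFlag K V)) : Prop :=
  (∀ Φ ∈ M, ∃! Ψ, Ψ ∈ N ∧ Φ.Related Ψ) ∧ (∀ Ψ ∈ N, ∃! Φ, Φ ∈ M ∧ Φ.Related Ψ)

def MoM (M N : Set (ProjFlag K V)) : Prop :=
  (M ∩ N).Nonempty ∨ (Disjoint M N ∧ Par M N)

def IsLP (g : Submodule K V) (M : Set (ProjFlag K V)) : Prop :=
  (∃ ε : Submodule K V, finrank K ε = 3 ∧ g ≤ ε ∧ M = flagsOfLinePlane g ε) ∨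
  (∃ P : Submodule K V, finrank K P = 1 ∧ P ≤ g ∧ M = flagsOfPointLine P g)

lemma isLP_ln {g : Submodule K V} {M : Set (ProjFlag K V)} (h : IsLP g M)
    {Φ : ProjFlag K V} (hΦ : Φ ∈ M) : Φ.ln = g := by
  rcases h with ⟨ε, -, -, rfl⟩ | ⟨P, -, -, rfl⟩
  · exact hΦ.1
  · exact hΦ.2

lemma pencil_exists_two (hV : finrank K V = 4) {M : Set (ProjFlag K V)} (h : IsPencil M) :
    ∃ Φ Ψ : ProjFlag K V, Φ ∈ M ∧ Ψ ∈ M ∧ Φ ≠ Ψ ∧ Φ.Related Ψ ∧ ComN Φ Ψ = M := by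
  rcases h with ⟨g, ε, hg, hε, hle, rfl⟩ | ⟨P, ε, hP, hε, hle, rfl⟩ | ⟨P, g, hP, hg, hle, rfl⟩
  · obtain ⟨Q₁, Q₂, hne, ⟨r1, h1⟩, ⟨r2, h2⟩⟩ := exists_two_points hg
    refine ⟨⟨Q₁, g, ε, r1, hg, hε, h1, hle⟩, ⟨Q₂, g, ε, r2, hg, hε, h2, hle⟩,
      ⟨rfl, rfl⟩, ⟨rfl, rfl⟩, fun hh => hne (congrArg ProjFlag.pt hh),
      Or.inr (Or.inr ⟨rfl, rfl⟩), ?_⟩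
    exact comN_eq_fLP rfl rfl hne
  · obtain ⟨h₁, h₂, hne, ⟨r1, a1, b1⟩, ⟨r2, a2, b2⟩⟩ := exists_two_lines hP hε hle
    refine ⟨⟨P, h₁, ε, hP, r1, hε, a1, b1⟩, ⟨P, h₂, ε, hP, r2, hε, a2, b2⟩,
      ⟨rfl, rfl⟩, ⟨rfl, rfl⟩, fun hh => hne (congrArg ProjFlag.ln hh),
      Or.inr (Or.inl ⟨rfl, rfl⟩), ?_⟩
    exact comN_eq_fPP rfl rfl hne
  · obtain ⟨ε₁, ε₂, hne, ⟨r1, a1⟩, ⟨r2, a2⟩⟩ := exists_two_planes hV hg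
    refine ⟨⟨P, g, ε₁, hP, hg, r1, hle, a1⟩, ⟨P, g, ε₂, hP, hg, r2, hle, a2⟩,
      ⟨rfl, rfl⟩, ⟨rfl, rfl⟩, fun hh => hne (congrArg ProjFlag.pl hh),
      Or.inl ⟨rfl, rfl⟩, ?_⟩
    exact comN_eq_fPL rfl rfl hne

end Pencils

section Transport
variable {α : ProjFlag K V → ProjFlag K V}

lemma comN_image (hbij : Function.Bijective α)
    (hα : ∀ Φ Ψ : ProjFlag K V, Φ.Related Ψ ↔ (α Φ).Related (α Ψ)) (Φ Ψ : ProjFlag K V) : α '' ComN Φ Ψ = ComN (α Φ) (α Ψ) := by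
  ext Ω'
  constructor
  · rintro ⟨Ω, ⟨h1, h2⟩, rfl⟩
    exact ⟨(hα _ _).mp h1, (hα _ _).mp h2⟩
  · rintro ⟨h1, h2⟩
    obtain ⟨Ω, rfl⟩ := hbij.2 Ω'
    exact ⟨Ω, ⟨(hα _ _).mpr h1, (hα _ _).mpr h2⟩, rfl⟩

lemma pencil_image [FiniteDimensional K V] (hbij : Function.Bijective α)
    (hα : ∀ Φ Ψ : ProjFlag K V, Φ.Related Ψ ↔ (α Φ).Related (α Ψ)) (hV : finrank K V = 4)
    {M : Set (ProjFlag K V)} (hM : IsPencil M) : IsPencil (α '' M) := by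
  obtain ⟨Φ, Ψ, hΦ, hΨ, hne, hrel, hC⟩ := pencil_exists_two hV hM
  rw [← hC, comN_image hbij hα]
  exact comN_isPencil (fun h => hne (hbij.1 h)) ((hα _ _).mp hrel)

lemma par_image (hα : ∀ Φ Ψ : ProjFlag K V, Φ.Related Ψ ↔ (α Φ).Related (α Ψ))
    {M N : Set (ProjFlag K V)} (h : Par M N) :
    Par (α '' M) (α '' N) := by
  constructor
  · rintro Φ' ⟨Φ, hΦ, rfl⟩
    obtain ⟨Ψ, ⟨hΨN, hrel⟩, huniq⟩ := h.1 Φ hΦ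
    refine ⟨α Ψ, ⟨⟨Ψ, hΨN, rfl⟩, (hα _ _).mp hrel⟩, ?_⟩
    rintro Ψ' ⟨⟨Ψ₀, hΨ₀, rfl⟩, hrel'⟩
    exact congrArg α (huniq Ψ₀ ⟨hΨ₀, (hα _ _).mpr hrel'⟩)
  · rintro Ψ' ⟨Ψ, hΨ, rfl⟩
    obtain ⟨Φ, ⟨hΦM, hrel⟩, huniq⟩ := h.2 Ψ hΨ
    refine ⟨α Φ, ⟨⟨Φ, hΦM, rfl⟩, (hα _ _).mp hrel⟩, ?_⟩
    rintro Φ' ⟨⟨Φ₀, hΦ₀, rfl⟩, hrel'⟩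
    exact congrArg α (huniq Φ₀ ⟨hΦ₀, (hα _ _).mpr hrel'⟩)

lemma mom_image (hbij : Function.Bijective α)
    (hα : ∀ Φ Ψ : ProjFlag K V, Φ.Related Ψ ↔ (α Φ).Related (α Ψ))
    {M N : Set (ProjFlag K V)} (h : MoM M N) :
    MoM (α '' M) (α '' N) := by
  rcases h with ⟨Φ, h1, h2⟩ | ⟨hdisj, hpar⟩
  · exact Or.inl ⟨α Φ, ⟨Φ, h1, rfl⟩, ⟨Φ, h2, rfl⟩⟩
  · exact Or.inr ⟨(Set.disjoint_image_iff hbij.1).mpr hdisj, par_image hα hpar⟩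

end Transport

section Core
variable [FiniteDimensional K V]

lemma not_par_pencil1 (hV : finrank K V = 4) {P ε : Submodule K V}
    (hP : finrank K P = 1) (hε : finrank K ε = 3) (hPε : P ≤ ε)
    {N : Set (ProjFlag K V)} (hN : IsPencil N)
    (hdisj : Disjoint (flagsOfPointPlane P ε) N)
    (hpar : Par (flagsOfPointPlane P ε) N) : False := by
  obtain ⟨h₁, h₂, hh, ⟨hr₁, hPh₁, hh₁ε⟩, ⟨hr₂, hPh₂, hh₂ε⟩⟩ := exists_two_lines hP hε hPε
  rcases hN with ⟨g', ε', hg', hε', hle', rfl⟩ | ⟨P', ε', hP', hε', hle', rfl⟩ |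
    ⟨P'', g'', hP'', hg'', hle'', rfl⟩
  · -- N = F[g', ε'] of type 0
    by_cases hee : ε = ε'
    · subst hee
      have hPg' : ¬ P ≤ g' := by
        intro hPg'
        exact Set.disjoint_left.mp hdisj
          (⟨rfl, rfl⟩ : (⟨P, g', ε, hP, hg', hε, hPg', hle'⟩ : ProjFlag K V) ∈
            flagsOfPointPlane P ε) ⟨rfl, rfl⟩
      obtain ⟨Ψ, ⟨hΨN, hrel⟩, -⟩ := hpar.1 ⟨P, h₁, ε, hP, hr₁, hε, hPh₁, hh₁ε⟩ ⟨rfl, rfl⟩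
      obtain ⟨hl, hp⟩ := hΨN
      rcases hrel with ⟨e1, e2⟩ | ⟨e1, e2⟩ | ⟨e1, e2⟩
      · exact hPg' (by rw [← hl, ← e2]; exact hPh₁)
      · have e1' : P = Ψ.pt := e1
        exact hPg' (by rw [← hl, e1']; exact Ψ.pt_le_ln)
      · exact hPg' (by rw [← hl, ← e1]; exact hPh₁)
    · obtain ⟨h, hr, hPh, hhε, hng⟩ := exists_line_ne hP hε hPε g'
      obtain ⟨Ψ, ⟨hΨN, hrel⟩, -⟩ := hpar.1 ⟨P, h, ε, hP, hr, hε, hPh, hhε⟩ ⟨rfl, rfl⟩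
      obtain ⟨hl, hp⟩ := hΨN
      rcases hrel with ⟨e1, e2⟩ | ⟨e1, e2⟩ | ⟨e1, e2⟩
      · exact hng (e2.trans hl)
      · exact hee (e2.trans hp)
      · exact hee (e2.trans hp)
  · -- N = F[P', ε'] of type 1
    by_cases hpp : P = P'
    · subst hpp
      by_cases hee : ε = ε'
      · subst hee
        exact Set.disjoint_left.mp hdisj
          (⟨rfl, rfl⟩ : (⟨P, h₁, ε, hP, hr₁, hε, hPh₁, hh₁ε⟩ : ProjFlag K V) ∈
            flagsOfPointPlane P ε) ⟨rfl, rfl⟩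
      · obtain ⟨h, hr, hPh, hhε, hne'⟩ := exists_line_avoid_plane hP hε hε' hee hPε
        obtain ⟨Ψ, ⟨hΨN, hrel⟩, -⟩ := hpar.1 ⟨P, h, ε, hP, hr, hε, hPh, hhε⟩ ⟨rfl, rfl⟩
        obtain ⟨hq, hp⟩ := hΨN
        rcases hrel with ⟨e1, e2⟩ | ⟨e1, e2⟩ | ⟨e1, e2⟩
        · have e2' : h = Ψ.ln := e2
          exact hne' (by rw [e2', ← hp]; exact Ψ.ln_le_pl)
        · exact hee (e2.trans hp)
        · exact hee (e2.trans hp)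
    · by_cases hee : ε = ε'
      · subst hee
        obtain ⟨h, hr, hPh, hhε, hnP'⟩ := exists_line_avoid_point hP hP' hpp hε hPε
        obtain ⟨Ψ, ⟨hΨN, hrel⟩, -⟩ := hpar.1 ⟨P, h, ε, hP, hr, hε, hPh, hhε⟩ ⟨rfl, rfl⟩
        obtain ⟨hq, hp⟩ := hΨN
        rcases hrel with ⟨e1, e2⟩ | ⟨e1, e2⟩ | ⟨e1, e2⟩
        · exact hpp (e1.trans hq)
        · exact hpp (e1.trans hq)
        · have e1' : h = Ψ.ln := e1
          exact hnP' (by rw [e1', ← hq]; exact Ψ.pt_le_ln)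
      · obtain ⟨Ψ, ⟨hΨN, hrel⟩, -⟩ := hpar.1 ⟨P, h₁, ε, hP, hr₁, hε, hPh₁, hh₁ε⟩ ⟨rfl, rfl⟩
        obtain ⟨hq, hp⟩ := hΨN
        rcases hrel with ⟨e1, e2⟩ | ⟨e1, e2⟩ | ⟨e1, e2⟩
        · exact hpp (e1.trans hq)
        · exact hpp (e1.trans hq)
        · exact hee (e2.trans hp)
  · -- N = F[P'', g''] of type 2
    by_cases hpp : P = P''
    · subst hpp
      have hgε : ¬ g'' ≤ ε := by
        intro hge
        exact Set.disjoint_left.mp hdisj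
          (⟨rfl, rfl⟩ : (⟨P, g'', ε, hP, hg'', hε, hle'', hge⟩ : ProjFlag K V) ∈
            flagsOfPointPlane P ε) ⟨rfl, rfl⟩
      obtain ⟨Ψ, ⟨hΨN, hrel⟩, -⟩ := hpar.1 ⟨P, h₁, ε, hP, hr₁, hε, hPh₁, hh₁ε⟩ ⟨rfl, rfl⟩
      obtain ⟨hq, hl⟩ := hΨN
      rcases hrel with ⟨e1, e2⟩ | ⟨e1, e2⟩ | ⟨e1, e2⟩
      · exact hgε (by rw [← hl, ← e2]; exact hh₁ε)
      · have e2' : ε = Ψ.pl := e2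
        exact hgε (by rw [← hl, e2']; exact Ψ.ln_le_pl)
      · exact hgε (by rw [← hl, ← e1]; exact hh₁ε)
    · obtain ⟨h, hr, hPh, hhε, hnP'⟩ := exists_line_avoid_point hP hP'' hpp hε hPε
      obtain ⟨Ψ, ⟨hΨN, hrel⟩, -⟩ := hpar.1 ⟨P, h, ε, hP, hr, hε, hPh, hhε⟩ ⟨rfl, rfl⟩
      obtain ⟨hq, hl⟩ := hΨN
      rcases hrel with ⟨e1, e2⟩ | ⟨e1, e2⟩ | ⟨e1, e2⟩
      · exact hpp (e1.trans hq)
      · exact hpp (e1.trans hq)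
      · have e1' : h = Ψ.ln := e1
        exact hnP' (by rw [e1', ← hq]; exact Ψ.pt_le_ln)
end Core

section Core2
variable [FiniteDimensional K V]

lemma isLP_line_eq (hV : finrank K V = 4) {g₁ g₂ : Submodule K V}
    (hg₁ : finrank K g₁ = 2) (hg₂ : finrank K g₂ = 2)
    {M N : Set (ProjFlag K V)} (hM : IsLP g₁ M) (hN : IsLP g₂ N) (h : MoM M N) :
    g₁ = g₂ := by
  rcases h with ⟨Φ, h1, h2⟩ | ⟨hdisj, hpar⟩
  · exact (isLP_ln hM h1).symm.trans (isLP_ln hN h2)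
  by_contra hne
  rcases hM with ⟨ε, hε, hgε, rfl⟩ | ⟨P, hP, hPg, rfl⟩
  · rcases hN with ⟨ε'', hε'', hgε'', rfl⟩ | ⟨P'', g₂', hP''⟩
    · -- (0,0)
      obtain ⟨Q, hQ, hQg, hQn⟩ := exists_point_avoid_line hg₁ hg₂ hne
      obtain ⟨Ψ, ⟨hΨN, hrel⟩, -⟩ := hpar.1 ⟨Q, g₁, ε, hQ, hg₁, hε, hQg, hgε⟩ ⟨rfl, rfl⟩
      obtain ⟨hl, hp⟩ := hΨN
      rcases hrel with ⟨e1, e2⟩ | ⟨e1, e2⟩ | ⟨e1, e2⟩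
      · exact hne (e2.trans hl)
      · have e1' : Q = Ψ.pt := e1
        exact hQn (by rw [e1', ← hl]; exact Ψ.pt_le_ln)
      · exact hne (e1.trans hl)
    · -- (0,2)
      obtain ⟨hg₂', rfl⟩ := hP''
      obtain ⟨Q, hQ, hQg, hQn⟩ := exists_point_ne hg₁ P''
      obtain ⟨Ψ, ⟨hΨN, hrel⟩, -⟩ := hpar.1 ⟨Q, g₁, ε, hQ, hg₁, hε, hQg, hgε⟩ ⟨rfl, rfl⟩
      obtain ⟨hq, hl⟩ := hΨN
      rcases hrel with ⟨e1, e2⟩ | ⟨e1, e2⟩ | ⟨e1, e2⟩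
      · exact hne (e2.trans hl)
      · exact hQn (e1.trans hq)
      · exact hne (e1.trans hl)
  · rcases hN with ⟨ε'', hε'', hgε'', rfl⟩ | ⟨P'', hP'', hP''g, rfl⟩
    · -- (2,0)
      obtain ⟨Q, hQ, hQg, hQn⟩ := exists_point_ne hg₂ P
      obtain ⟨Φ, ⟨hΦM, hrel⟩, -⟩ := hpar.2 ⟨Q, g₂, ε'', hQ, hg₂, hε'', hQg, hgε''⟩ ⟨rfl, rfl⟩
      obtain ⟨hq, hl⟩ := hΦM
      rcases hrel with ⟨e1, e2⟩ | ⟨e1, e2⟩ | ⟨e1, e2⟩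
      · have e2' : Φ.ln = g₂ := e2
        exact hne (hl.symm.trans e2')
      · have e1' : Φ.pt = Q := e1
        exact hQn (e1'.symm.trans hq)
      · have e1' : Φ.ln = g₂ := e1
        exact hne (hl.symm.trans e1')
    · -- (2,2)
      by_cases hpp : P = P''
      · subst hpp
        obtain ⟨ε, hε3, hgε, hgn⟩ := exists_plane_avoid_line hV hg₁ hg₂ hne
        obtain ⟨Ψ, ⟨hΨN, hrel⟩, -⟩ := hpar.1 ⟨P, g₁, ε, hP, hg₁, hε3, hPg, hgε⟩ ⟨rfl, rfl⟩
        obtain ⟨hq, hl⟩ := hΨN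
        rcases hrel with ⟨e1, e2⟩ | ⟨e1, e2⟩ | ⟨e1, e2⟩
        · exact hne (e2.trans hl)
        · have e2' : ε = Ψ.pl := e2
          exact hgn (by rw [e2', ← hl]; exact Ψ.ln_le_pl)
        · exact hne (e1.trans hl)
      · obtain ⟨ε, hε3, hgε⟩ := exists_plane_over hV hg₁
        obtain ⟨Ψ, ⟨hΨN, hrel⟩, -⟩ := hpar.1 ⟨P, g₁, ε, hP, hg₁, hε3, hPg, hgε⟩ ⟨rfl, rfl⟩
        obtain ⟨hq, hl⟩ := hΨN
        rcases hrel with ⟨e1, e2⟩ | ⟨e1, e2⟩ | ⟨e1, e2⟩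
        · exact hpp (e1.trans hq)
        · exact hpp (e1.trans hq)
        · exact hne (e1.trans hl)

lemma mom_pencil0_same_line {g ε₁ ε₂ : Submodule K V} (hg : finrank K g = 2)
    (hε₁ : finrank K ε₁ = 3) (hε₂ : finrank K ε₂ = 3) (h1 : g ≤ ε₁) (h2 : g ≤ ε₂) :
    MoM (flagsOfLinePlane g ε₁) (flagsOfLinePlane g ε₂) := by
  by_cases hee : ε₁ = ε₂
  · subst hee
    obtain ⟨Q, hQ, hQg⟩ := exists_point_le hg
    exact Or.inl ⟨⟨Q, g, ε₁, hQ, hg, hε₁, hQg, h1⟩, ⟨rfl, rfl⟩, ⟨rfl, rfl⟩⟩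
  · refine Or.inr ⟨Set.disjoint_left.mpr ?_, ?_, ?_⟩
    · rintro Φ ⟨-, hp1⟩ ⟨-, hp2⟩
      exact hee (hp1.symm.trans hp2)
    · rintro Φ ⟨hl, hp⟩
      refine ⟨⟨Φ.pt, g, ε₂, Φ.finrank_pt, hg, hε₂, hl ▸ Φ.pt_le_ln, h2⟩,
        ⟨⟨rfl, rfl⟩, Or.inl ⟨rfl, hl⟩⟩, ?_⟩
      rintro Ψ' ⟨⟨hl', hp'⟩, hrel'⟩
      rcases hrel' with ⟨e1, e2⟩ | ⟨e1, e2⟩ | ⟨e1, e2⟩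
      · exact ProjFlag.ext' e1.symm (by rw [hl']) (by rw [hp'])
      · exact absurd (hp.symm.trans (e2.trans hp')) hee
      · exact absurd (hp.symm.trans (e2.trans hp')) hee
    · rintro Ψ ⟨hl, hp⟩
      refine ⟨⟨Ψ.pt, g, ε₁, Ψ.finrank_pt, hg, hε₁, hl ▸ Ψ.pt_le_ln, h1⟩,
        ⟨⟨rfl, rfl⟩, Or.inl ⟨rfl, hl.symm⟩⟩, ?_⟩
      rintro Φ' ⟨⟨hl', hp'⟩, hrel'⟩
      rcases hrel' with ⟨e1, e2⟩ | ⟨e1, e2⟩ | ⟨e1, e2⟩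
      · exact ProjFlag.ext' e1 (by rw [hl']) (by rw [hp'])
      · exact absurd (hp'.symm.trans (e2.trans hp)) hee
      · exact absurd (hp'.symm.trans (e2.trans hp)) hee

end Core2

section Final
variable [FiniteDimensional K V] {α : ProjFlag K V → ProjFlag K V}

lemma image_pencil0_isLP (hbij : Function.Bijective α)
    (hα : ∀ Φ Ψ : ProjFlag K V, Φ.Related Ψ ↔ (α Φ).Related (α Ψ))
    (hV : finrank K V = 4) {g ε : Submodule K V}
    (hg : finrank K g = 2) (hε : finrank K ε = 3) (hgε : g ≤ ε) :
    ∃ g' : Submodule K V, finrank K g' = 2 ∧ IsLP g' (α '' flagsOfLinePlane g ε) := by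
  have hpen : IsPencil (α '' flagsOfLinePlane g ε) :=
    pencil_image hbij hα hV (Or.inl ⟨g, ε, hg, hε, hgε, rfl⟩)
  rcases hpen with ⟨g', ε', hg', hε', hle', hEq⟩ | hpen1 | ⟨P', g', hP', hg', hle', hEq⟩
  · exact ⟨g', hg', Or.inl ⟨ε', hε', hle', hEq⟩⟩
  · exfalso
    obtain ⟨P₁, ε₁, hP₁, hε₁, hle₁, hEq⟩ := hpen1
    obtain ⟨ε₂, hε₂, hgε₂, hne₂⟩ := exists_plane_ne hV hg ε
    have hmom := mom_pencil0_same_line hg hε hε₂ hgε hgε₂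
    rcases hmom with ⟨Φ, h1, h2⟩ | ⟨hdisj, hpar⟩
    · exact hne₂ (h2.2.symm.trans h1.2)
    have hNpen : IsPencil (α '' flagsOfLinePlane g ε₂) :=
      pencil_image hbij hα hV (Or.inl ⟨g, ε₂, hg, hε₂, hgε₂, rfl⟩)
    have hdisj' := (Set.disjoint_image_iff hbij.1).mpr hdisj
    have hpar' := par_image hα hpar
    rw [hEq] at hdisj' hpar'
    exact not_par_pencil1 hV hP₁ hε₁ hle₁ hNpen hdisj' hpar'
  · exact ⟨g', hg', Or.inr ⟨P', hP', hle', hEq⟩⟩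

lemma key_line (hbij : Function.Bijective α)
    (hα : ∀ Φ Ψ : ProjFlag K V, Φ.Related Ψ ↔ (α Φ).Related (α Ψ)) (hV : finrank K V = 4)
    {g : Submodule K V} (hg : finrank K g = 2) :
    ∃ g' : Submodule K V, finrank K g' = 2 ∧
      ∀ Φ : ProjFlag K V, Φ.ln = g → (α Φ).ln = g' := by
  obtain ⟨ε₀, hε₀, hgε₀⟩ := exists_plane_over hV hg
  obtain ⟨g', hg', hLP⟩ := image_pencil0_isLP hbij hα hV hg hε₀ hgε₀
  refine ⟨g', hg', fun Φ hΦ => ?_⟩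
  obtain ⟨g'', hg'', hLP'⟩ := image_pencil0_isLP hbij hα hV hg Φ.finrank_pl (hΦ ▸ Φ.ln_le_pl)
  have hmom : MoM (flagsOfLinePlane g Φ.pl) (flagsOfLinePlane g ε₀) :=
    mom_pencil0_same_line hg Φ.finrank_pl hε₀ (hΦ ▸ Φ.ln_le_pl) hgε₀
  have heq : g'' = g' := isLP_line_eq hV hg'' hg' hLP' hLP (mom_image hbij hα hmom)
  have hmem : α Φ ∈ α '' flagsOfLinePlane g Φ.pl := ⟨Φ, ⟨hΦ, rfl⟩, rfl⟩
  rw [← heq]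
  exact isLP_ln hLP' hmem

end Final

/-- **Proposition 2.** Every Plücker transformation `α` induces a bijection `β` of the set
of lines of `V` (the 2-dimensional subspaces) such that `α` maps `F[g]` onto `F[β g]`
for every line `g`. -/
theorem plucker_induces_line_bijection
    (hV : Module.finrank K V = 4)
    (α : ProjFlag K V → ProjFlag K V) (hbij : Function.Bijective α)
    (hα : ∀ Φ Ψ : ProjFlag K V, Φ.Related Ψ ↔ (α Φ).Related (α Ψ)) :
    ∃ β : {g : Submodule K V // Module.finrank K g = 2} ≃
          {g : Submodule K V // Module.finrank K g = 2},
      ∀ g : {g : Submodule K V // Module.finrank K g = 2},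
        α '' flagsOfLine (g : Submodule K V) = flagsOfLine ((β g : Submodule K V)) := by
  have hfd : FiniteDimensional K V := FiniteDimensional.of_finrank_eq_succ (n := 3) hV
  set e := Equiv.ofBijective α hbij with he
  have hbij' : Function.Bijective (⇑e.symm) := e.symm.bijective
  have hα' : ∀ Φ Ψ : ProjFlag K V, Φ.Related Ψ ↔ (e.symm Φ).Related (e.symm Ψ) := by
    intro Φ Ψ
    have h1 : α (e.symm Φ) = Φ := e.apply_symm_apply Φ
    have h2 : α (e.symm Ψ) = Ψ := e.apply_symm_apply Ψ
    conv_lhs => rw [← h1, ← h2]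
    exact (hα _ _).symm
  have key₁ : ∀ g : {g : Submodule K V // Module.finrank K g = 2},
      ∃ g' : {g : Submodule K V // Module.finrank K g = 2},
        ∀ Φ : ProjFlag K V, Φ.ln = g.1 → (α Φ).ln = g'.1 := by
    intro g
    obtain ⟨g', hg', hmap⟩ := key_line hbij hα hV g.2
    exact ⟨⟨g', hg'⟩, hmap⟩
  have key₂ : ∀ g : {g : Submodule K V // Module.finrank K g = 2},
      ∃ g' : {g : Submodule K V // Module.finrank K g = 2},
        ∀ Φ : ProjFlag K V, Φ.ln = g.1 → (e.symm Φ).ln = g'.1 := by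
    intro g
    obtain ⟨g', hg', hmap⟩ := key_line hbij' hα' hV g.2
    exact ⟨⟨g', hg'⟩, hmap⟩
  choose L hL using key₁
  choose L' hL' using key₂
  have hLL' : ∀ g, L' (L g) = g := by
    intro g
    obtain ⟨Q, hQ, hQg⟩ := exists_point_le g.2
    obtain ⟨ε, hε, hgε⟩ := exists_plane_over hV g.2
    have h1 : (α (⟨Q, g.1, ε, hQ, g.2, hε, hQg, hgε⟩ : ProjFlag K V)).ln = (L g).1 :=
      hL g _ rfl
    have h2 : (e.symm (α (⟨Q, g.1, ε, hQ, g.2, hε, hQg, hgε⟩ : ProjFlag K V))).ln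
        = (L' (L g)).1 := hL' (L g) _ h1
    have h3 : e.symm (α (⟨Q, g.1, ε, hQ, g.2, hε, hQg, hgε⟩ : ProjFlag K V))
        = (⟨Q, g.1, ε, hQ, g.2, hε, hQg, hgε⟩ : ProjFlag K V) := e.symm_apply_apply _
    rw [h3] at h2
    exact Subtype.ext h2.symm
  have hL'L : ∀ h, L (L' h) = h := by
    intro h
    obtain ⟨Q, hQ, hQg⟩ := exists_point_le h.2
    obtain ⟨ε, hε, hgε⟩ := exists_plane_over hV h.2
    have h1 : (e.symm (⟨Q, h.1, ε, hQ, h.2, hε, hQg, hgε⟩ : ProjFlag K V)).ln = (L' h).1 :=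
      hL' h _ rfl
    have h2 : (α (e.symm (⟨Q, h.1, ε, hQ, h.2, hε, hQg, hgε⟩ : ProjFlag K V))).ln
        = (L (L' h)).1 := hL (L' h) _ h1
    have h3 : α (e.symm (⟨Q, h.1, ε, hQ, h.2, hε, hQg, hgε⟩ : ProjFlag K V))
        = (⟨Q, h.1, ε, hQ, h.2, hε, hQg, hgε⟩ : ProjFlag K V) := e.apply_symm_apply _
    rw [h3] at h2
    exact Subtype.ext h2.symm
  refine ⟨⟨L, L', hLL', hL'L⟩, fun g => ?_⟩
  ext Ψ
  constructor
  · rintro ⟨Φ, hΦ, rfl⟩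
    exact hL g Φ hΦ
  · intro hΨ
    refine ⟨e.symm Ψ, ?_, e.apply_symm_apply Ψ⟩
    have h2 : (e.symm Ψ).ln = (L' (L g)).1 := hL' (L g) Ψ hΨ
    rw [hLL' g] at h2
    exact h2
end

section
/- Let α : F → F be a Plücker transformation and let β be a bijection of the set of lines of V such that α maps F[g] onto F[β(g)] for every line g. If g and h are distinct lines of V with g ⊓ h ≠ 0 (intersecting lines), then β(g) and β(h) are distinct and β(g) ⊓ β(h) ≠ 0; the same holds for β⁻¹: if g and h are distinct lines with g ⊓ h ≠ 0 then β⁻¹(g) ≠ β⁻¹(h) and β⁻¹(g) ⊓ β⁻¹(h) ≠ 0. -/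
variable {K V : Type*} [DivisionRing K] [AddCommGroup V] [Module K V]

/-- Related flags with distinct line components have intersecting lines. -/
lemma ProjFlag.related_inf_ne_bot (Φ Ψ : ProjFlag K V) (hr : Φ.Related Ψ)
    (hne : Φ.ln ≠ Ψ.ln) : Φ.ln ⊓ Ψ.ln ≠ ⊥ := by
  have hpt : Φ.pt = Ψ.pt := by
    rcases hr with ⟨_, h⟩ | ⟨h, _⟩ | ⟨h, _⟩ <;> first | exact h | exact absurd h hne
  have hle : Φ.pt ≤ Φ.ln ⊓ Ψ.ln := le_inf Φ.pt_le_ln (hpt ▸ Ψ.pt_le_ln)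
  intro hbot
  have hb : Φ.pt = ⊥ := le_bot_iff.mp (hbot ▸ hle)
  have h0 : Module.finrank K Φ.pt = 0 := by rw [hb]; exact finrank_bot K V
  rw [Φ.finrank_pt] at h0
  exact one_ne_zero h0

/-- Distinct intersecting lines support a pair of related flags. -/
lemma exists_related_flags (hV : Module.finrank K V = 4)
    (g h : Submodule K V) (hg : Module.finrank K g = 2) (hh : Module.finrank K h = 2)
    (hne : g ≠ h) (hint : g ⊓ h ≠ ⊥) :
    ∃ Φ Ψ : ProjFlag K V, Φ.ln = g ∧ Ψ.ln = h ∧ Φ.Related Ψ := by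
  haveI : FiniteDimensional K V := Module.finite_of_finrank_pos (by omega)
  have hinf_le : g ⊓ h ≤ g := inf_le_left
  have hk_le : Module.finrank K ↥(g ⊓ h) ≤ 2 := hg ▸ Submodule.finrank_mono hinf_le
  have hk_ne0 : Module.finrank K ↥(g ⊓ h) ≠ 0 := by
    intro h0
    exact hint (Submodule.finrank_eq_zero.mp h0)
  have hk_ne2 : Module.finrank K ↥(g ⊓ h) ≠ 2 := by
    intro h2
    have h1 : g ⊓ h = g := Submodule.eq_of_le_of_finrank_le hinf_le (by omega)
    have hgh : g ≤ h := h1 ▸ inf_le_right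
    exact hne (Submodule.eq_of_le_of_finrank_le hgh (by omega))
  have hk : Module.finrank K ↥(g ⊓ h) = 1 := by omega
  have hsup : Module.finrank K ↥(g ⊔ h) = 3 := by
    have := Submodule.finrank_sup_add_finrank_inf_eq g h
    omega
  refine ⟨⟨g ⊓ h, g, g ⊔ h, hk, hg, hsup, inf_le_left, le_sup_left⟩,
    ⟨g ⊓ h, h, g ⊔ h, hk, hh, hsup, inf_le_right, le_sup_right⟩, rfl, rfl,
    Or.inr (Or.inl ⟨rfl, rfl⟩)⟩

/-- **Proposition 3.** The line bijection `β` induced by a Plücker transformation, as well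
as its inverse, takes intersecting lines to intersecting lines. -/
theorem plucker_line_bijection_preserves_intersecting_lines
    (hV : Module.finrank K V = 4)
    (α : ProjFlag K V → ProjFlag K V) (hbij : Function.Bijective α)
    (hα : ∀ Φ Ψ : ProjFlag K V, Φ.Related Ψ ↔ (α Φ).Related (α Ψ))
    (β : {g : Submodule K V // Module.finrank K g = 2} ≃
         {g : Submodule K V // Module.finrank K g = 2})
    (hβ : ∀ g : {g : Submodule K V // Module.finrank K g = 2},
      α '' flagsOfLine (g : Submodule K V) = flagsOfLine ((β g : Submodule K V))) :
    ∀ g h : {g : Submodule K V // Module.finrank K g = 2}, g ≠ h →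
      (g : Submodule K V) ⊓ (h : Submodule K V) ≠ ⊥ →
        (β g ≠ β h ∧ (β g : Submodule K V) ⊓ (β h : Submodule K V) ≠ ⊥) ∧
        (β.symm g ≠ β.symm h ∧
          (β.symm g : Submodule K V) ⊓ (β.symm h : Submodule K V) ≠ ⊥) := by
  intro g h gne hint
  have hcne : (g : Submodule K V) ≠ (h : Submodule K V) := fun e => gne (Subtype.ext e)
  obtain ⟨Φ, Ψ, hΦ, hΨ, hr⟩ := exists_related_flags hV g h g.2 h.2 hcne hint
  constructor
  · have hβne : β g ≠ β h := fun e => gne (β.injective e)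
    refine ⟨hβne, ?_⟩
    have hΦ' : α Φ ∈ flagsOfLine ((β g : Submodule K V)) := by
      rw [← hβ]; exact ⟨Φ, hΦ, rfl⟩
    have hΨ' : α Ψ ∈ flagsOfLine ((β h : Submodule K V)) := by
      rw [← hβ]; exact ⟨Ψ, hΨ, rfl⟩
    have hr' := (hα Φ Ψ).mp hr
    have lnne : (α Φ).ln ≠ (α Ψ).ln := by
      rw [hΦ', hΨ']
      exact fun e => hβne (Subtype.ext e)
    have := ProjFlag.related_inf_ne_bot (α Φ) (α Ψ) hr' lnne
    rwa [hΦ', hΨ'] at this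
  · have hβne : β.symm g ≠ β.symm h := fun e => gne (β.symm.injective e)
    refine ⟨hβne, ?_⟩
    -- pull Φ, Ψ back through α
    have hΦmem : Φ ∈ α '' flagsOfLine ((β.symm g : Submodule K V)) := by
      rw [hβ, Equiv.apply_symm_apply]; exact hΦ
    have hΨmem : Ψ ∈ α '' flagsOfLine ((β.symm h : Submodule K V)) := by
      rw [hβ, Equiv.apply_symm_apply]; exact hΨ
    obtain ⟨Φ₀, hΦ₀mem, hΦ₀⟩ := hΦmem
    obtain ⟨Ψ₀, hΨ₀mem, hΨ₀⟩ := hΨmem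
    have hr₀ : Φ₀.Related Ψ₀ := (hα Φ₀ Ψ₀).mpr (by rw [hΦ₀, hΨ₀]; exact hr)
    have lnne : Φ₀.ln ≠ Ψ₀.ln := by
      rw [hΦ₀mem, hΨ₀mem]
      exact fun e => hβne (Subtype.ext e)
    have := ProjFlag.related_inf_ne_bot Φ₀ Ψ₀ hr₀ lnne
    rwa [hΦ₀mem, hΨ₀mem] at this
end

section
/- Let p ∈ V, t ∈ Λ²V and e* ∈ V* all be nonzero. Then the 1-dimensional subspace K·(p ⊗ t ⊗ e*) of Ṽ belongs to the flag variety 𝒢 if and only if p ⊗ t ⊗ e* ∈ ker i₀₁ ⊓ ker i₁₂. Consequently 𝒢 is the intersection of the Segre variety of Ṽ with the projective subspace arising from ker i₀₁ ⊓ ker i₁₂. -/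
open TensorProduct

variable (K V : Type*) [Field K] [AddCommGroup V] [Module K V]

-- Helper instances (the canonical tensor product instances; registering them here merely
-- speeds up instance search, which otherwise gets lost unfolding `⋀[K]^2 V`).
noncomputable instance : AddCommGroup (↥(⋀[K]^2 V) ⊗[K] Module.Dual K V) :=
  TensorProduct.addCommGroup

noncomputable instance : AddCommGroup (V ⊗[K] (↥(⋀[K]^2 V) ⊗[K] Module.Dual K V)) :=
  TensorProduct.addCommGroup

/-- The wedge `q ∧ r` of two vectors, as an element of the second exterior power. -/
def wedge2 (q r : V) : ⋀[K]^2 V :=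
  ⟨ExteriorAlgebra.ιMulti K 2 ![q, r],
    ExteriorAlgebra.ιMulti_range K 2 (Set.mem_range_self _)⟩

/-- The 96-dimensional space `Ṽ = V ⊗ Λ²V ⊗ V*`. -/
abbrev FlagTensor := V ⊗[K] ↥(⋀[K]^2 V) ⊗[K] (Module.Dual K V)

/-- `x = φ(Φ)`: the 1-dimensional subspace `x` of `Ṽ` represents the flag `Φ`, i.e. `x` is
spanned by `p ⊗ (q ∧ r) ⊗ e*` where `p` spans the point of `Φ`, `q, r` is a basis of the
line of `Φ`, and `e*` is a linear form whose kernel is the plane of `Φ`. -/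
def IsFlagRep (Φ : ProjFlag K V) (x : Submodule K (FlagTensor K V)) : Prop :=
  ∃ (p q r : V) (e : Module.Dual K V),
    Submodule.span K {p} = Φ.pt ∧ Submodule.span K {q, r} = Φ.ln ∧
    LinearMap.ker e = Φ.pl ∧
    x = Submodule.span K {p ⊗ₜ[K] wedge2 K V q r ⊗ₜ[K] e}

/-- The flag variety `𝒢`: the set of all 1-dimensional subspaces `φ(Φ)` of `Ṽ` with `Φ` a
flag. -/
def flagVariety : Set (Submodule K (FlagTensor K V)) :=
  {x | ∃ Φ : ProjFlag K V, IsFlagRep K V Φ x}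

noncomputable instance : AddCommGroup (↥(⋀[K]^3 V) ⊗[K] Module.Dual K V) :=
  TensorProduct.addCommGroup

/-- The wedge `p ∧ q ∧ r` of three vectors, as an element of the third exterior power. -/
def wedge3 (p q r : V) : ⋀[K]^3 V :=
  ⟨ExteriorAlgebra.ιMulti K 3 ![p, q, r],
    ExteriorAlgebra.ιMulti_range K 3 (Set.mem_range_self _)⟩


section FlagHelpers

lemma coe_wedge2 (q r : V) :
    (wedge2 K V q r : ExteriorAlgebra K V) =
      ExteriorAlgebra.ι K q * ExteriorAlgebra.ι K r := by
  simp [wedge2, ExteriorAlgebra.ιMulti_apply, List.ofFn_succ, mul_assoc]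

lemma coe_wedge3 (p q r : V) :
    (wedge3 K V p q r : ExteriorAlgebra K V) =
      ExteriorAlgebra.ι K p * (ExteriorAlgebra.ι K q * ExteriorAlgebra.ι K r) := by
  simp [wedge3, ExteriorAlgebra.ιMulti_apply, List.ofFn_succ, mul_assoc]

lemma exteriorPower_two_induction {Q : ⋀[K]^2 V → Prop}
    (hwedge : ∀ q r : V, Q (wedge2 K V q r)) (h0 : Q 0)
    (hadd : ∀ a b, Q a → Q b → Q (a + b))
    (hsmul : ∀ (k : K) a, Q a → Q (k • a)) : ∀ t, Q t := by
  have hmem2 : ∀ {y : ExteriorAlgebra K V},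
      y ∈ Submodule.span K (Set.range (ExteriorAlgebra.ιMulti K 2 (M := V))) →
      y ∈ ⋀[K]^2 V := fun h => by
    rw [← ExteriorAlgebra.ιMulti_span_fixedDegree]; exact h
  rintro ⟨x, hx⟩
  have hx' : x ∈ Submodule.span K (Set.range (ExteriorAlgebra.ιMulti K 2 (M := V))) := by
    rw [ExteriorAlgebra.ιMulti_span_fixedDegree]; exact hx
  revert hx
  induction hx' using Submodule.span_induction with
  | mem y hy =>
    obtain ⟨v, rfl⟩ := hy
    intro hx2
    have hv : (⟨ExteriorAlgebra.ιMulti K 2 v, hx2⟩ : ⋀[K]^2 V) = wedge2 K V (v 0) (v 1) := by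
      apply Subtype.ext
      show ExteriorAlgebra.ιMulti K 2 v = ExteriorAlgebra.ιMulti K 2 ![v 0, v 1]
      congr 1
      funext i; fin_cases i <;> rfl
    rw [hv]; exact hwedge _ _
  | zero =>
    intro hx2
    have h : (⟨(0 : ExteriorAlgebra K V), hx2⟩ : ⋀[K]^2 V) = 0 := Subtype.ext rfl
    rw [h]; exact h0
  | add a b ha hb iha ihb =>
    intro hx2
    have h : (⟨a + b, hx2⟩ : ⋀[K]^2 V) = ⟨a, hmem2 ha⟩ + ⟨b, hmem2 hb⟩ := Subtype.ext rfl
    rw [h]; exact hadd _ _ (iha _) (ihb _)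
  | smul k a ha iha =>
    intro hx2
    have h : (⟨k • a, hx2⟩ : ⋀[K]^2 V) = k • (⟨a, hmem2 ha⟩ : ⋀[K]^2 V) := Subtype.ext rfl
    rw [h]; exact hsmul _ _ (iha _)

variable {K V}

lemma eq_zero_of_tmul_eq_zero_left {M N : Type*} [AddCommGroup M] [Module K M]
    [AddCommGroup N] [Module K N] {a : M} {b : N}
    (h : a ⊗ₜ[K] b = (0 : M ⊗[K] N)) (hb : b ≠ 0) : a = 0 := by
  obtain ⟨φ, hφ⟩ : ∃ φ : Module.Dual K N, φ b ≠ 0 := by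
    by_contra hcon
    push_neg at hcon
    exact hb ((Module.forall_dual_apply_eq_zero_iff K b).mp hcon)
  have h2 := congrArg ((TensorProduct.rid K M).toLinearMap.comp (LinearMap.lTensor M φ)) h
  simp only [LinearMap.comp_apply, LinearMap.lTensor_tmul, LinearEquiv.coe_coe,
    TensorProduct.rid_tmul, map_zero] at h2
  rcases smul_eq_zero.mp h2 with h3 | h3
  · exact absurd h3 hφ
  · exact h3

lemma eq_zero_of_tmul_eq_zero_right {M N : Type*} [AddCommGroup M] [Module K M]
    [AddCommGroup N] [Module K N] {a : M} {b : N}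
    (h : a ⊗ₜ[K] b = (0 : M ⊗[K] N)) (ha : a ≠ 0) : b = 0 := by
  obtain ⟨φ, hφ⟩ : ∃ φ : Module.Dual K M, φ a ≠ 0 := by
    by_contra hcon
    push_neg at hcon
    exact ha ((Module.forall_dual_apply_eq_zero_iff K a).mp hcon)
  have h2 := congrArg ((TensorProduct.lid K N).toLinearMap.comp (LinearMap.rTensor N φ)) h
  simp only [LinearMap.comp_apply, LinearMap.rTensor_tmul, LinearEquiv.coe_coe,
    TensorProduct.lid_tmul, map_zero] at h2
  rcases smul_eq_zero.mp h2 with h3 | h3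
  · exact absurd h3 hφ
  · exact h3

lemma range_eq_top_of_ne_zero {e : Module.Dual K V} (he : e ≠ 0) :
    LinearMap.range e = ⊤ := by
  obtain ⟨x, hx⟩ : ∃ x, e x ≠ 0 := by
    by_contra hcon
    push_neg at hcon
    exact he (LinearMap.ext fun x => hcon x)
  rw [LinearMap.range_eq_top]
  intro k
  exact ⟨(k * (e x)⁻¹) • x, by simp [mul_assoc, inv_mul_cancel₀ hx]⟩

lemma finrank_ker_of_ne_zero (hV : Module.finrank K V = 4) {e : Module.Dual K V}
    (he : e ≠ 0) : Module.finrank K (LinearMap.ker e) = 3 := by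
  have : FiniteDimensional K V := FiniteDimensional.of_finrank_pos (by omega)
  have h1 := LinearMap.finrank_range_add_finrank_ker e
  rw [range_eq_top_of_ne_zero he, finrank_top, Module.finrank_self, hV] at h1
  omega

lemma exists_dual_ne_zero_at {p : V} (hp : p ≠ 0) : ∃ φ : Module.Dual K V, φ p ≠ 0 := by
  by_contra hcon
  push_neg at hcon
  exact hp ((Module.forall_dual_apply_eq_zero_iff K p).mp hcon)

end FlagHelpers

set_option maxHeartbeats 1600000 in
/-- **Proposition 5** (incidence description of the flag variety). For nonzero `p`, `t`,
`e*`, the point `K·(p ⊗ t ⊗ e*)` of the Segre variety belongs to the flag variety `𝒢` if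
and only if `p ⊗ t ⊗ e* ∈ ker i₀₁ ⊓ ker i₁₂`; consequently `𝒢` is the intersection of the
Segre variety with the projective subspace arising from `ker i₀₁ ⊓ ker i₁₂`. Here the
wedge `V × Λ²V → Λ³V` is given as a bilinear map `w` with `w p (q ∧ r) = p ∧ q ∧ r`, and
the contraction by `e*` as a linear map `c e*` with `c e* (q ∧ r) = e*(q)·r − e*(r)·q`. -/
theorem flagVariety_eq_segre_inter_subspace
    (hV : Module.finrank K V = 4)
    (w : V →ₗ[K] ↥(⋀[K]^2 V) →ₗ[K] ↥(⋀[K]^3 V))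
    (hw : ∀ p q r : V, w p (wedge2 K V q r) = wedge3 K V p q r)
    (i01 : FlagTensor K V →ₗ[K] (↥(⋀[K]^3 V) ⊗[K] Module.Dual K V))
    (hi01 : ∀ (p : V) (t : ⋀[K]^2 V) (e : Module.Dual K V),
      i01 (p ⊗ₜ[K] t ⊗ₜ[K] e) = (w p t) ⊗ₜ[K] e)
    (c : Module.Dual K V → (↥(⋀[K]^2 V) →ₗ[K] V))
    (hc : ∀ (e : Module.Dual K V) (q r : V),
      c e (wedge2 K V q r) = e q • r - e r • q)
    (i12 : FlagTensor K V →ₗ[K] (V ⊗[K] V))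
    (hi12 : ∀ (p : V) (t : ⋀[K]^2 V) (e : Module.Dual K V),
      i12 (p ⊗ₜ[K] t ⊗ₜ[K] e) = p ⊗ₜ[K] (c e t)) :
    (∀ (p : V) (t : ⋀[K]^2 V) (e : Module.Dual K V), p ≠ 0 → t ≠ 0 → e ≠ 0 →
      (Submodule.span K {p ⊗ₜ[K] t ⊗ₜ[K] e} ∈ flagVariety K V ↔
        p ⊗ₜ[K] t ⊗ₜ[K] e ∈ LinearMap.ker i01 ⊓ LinearMap.ker i12)) ∧
    flagVariety K V =
      {x : Submodule K (FlagTensor K V) |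
        (∃ (p : V) (t : ⋀[K]^2 V) (e : Module.Dual K V), p ≠ 0 ∧ t ≠ 0 ∧ e ≠ 0 ∧
          x = Submodule.span K {p ⊗ₜ[K] t ⊗ₜ[K] e}) ∧
        x ≤ LinearMap.ker i01 ⊓ LinearMap.ker i12} := by
  classical
  have hfin : FiniteDimensional K V := FiniteDimensional.of_finrank_pos (by omega)
  have coe_w : ∀ (p : V) (t : ⋀[K]^2 V),
      ((w p t : ⋀[K]^3 V) : ExteriorAlgebra K V) =
        ExteriorAlgebra.ι K p * (t : ExteriorAlgebra K V) := by
    intro p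
    refine exteriorPower_two_induction K V ?_ ?_ ?_ ?_
    · intro q r
      rw [hw, coe_wedge3, coe_wedge2]
    · simp
    · intro a b ha hb
      rw [map_add, Submodule.coe_add, Submodule.coe_add, ha, hb, mul_add]
    · intro k a ha
      rw [map_smul, Submodule.coe_smul, Submodule.coe_smul, ha, mul_smul_comm]
  have coe_c : ∀ (f : Module.Dual K V) (t : ⋀[K]^2 V),
      ExteriorAlgebra.ι K (c f t) =
        CliffordAlgebra.contractLeft (Q := (0 : QuadraticForm K V)) f
          (t : ExteriorAlgebra K V) := by
    intro f
    refine exteriorPower_two_induction K V ?_ ?_ ?_ ?_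
    · intro q r
      rw [hc, coe_wedge2, CliffordAlgebra.contractLeft_ι_mul, CliffordAlgebra.contractLeft_ι,
        map_sub, map_smul, map_smul, ← Algebra.commutes, ← Algebra.smul_def]
    · simp
    · intro a b ha hb
      rw [map_add, Submodule.coe_add, map_add, ha, hb]
      exact (map_add _ _ _).symm
    · intro k a ha
      rw [map_smul, Submodule.coe_smul, map_smul, ha]
      exact (map_smul _ _ _).symm
  -- backward direction
  have hback : ∀ (p : V) (t : ⋀[K]^2 V) (e : Module.Dual K V), p ≠ 0 → t ≠ 0 → e ≠ 0 →
      p ⊗ₜ[K] t ⊗ₜ[K] e ∈ LinearMap.ker i01 ⊓ LinearMap.ker i12 →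
      Submodule.span K {p ⊗ₜ[K] t ⊗ₜ[K] e} ∈ flagVariety K V := by
    intro p t e hp ht he hker
    obtain ⟨hk1, hk2⟩ := Submodule.mem_inf.mp hker
    rw [LinearMap.mem_ker] at hk1 hk2
    have hwpt : w p t = 0 :=
      eq_zero_of_tmul_eq_zero_left (K := K) (by rw [← hi01]; exact hk1) he
    have hpc : p ⊗ₜ[K] (c e t) = (0 : V ⊗[K] V) := by rw [← hi12]; exact hk2
    have hcet : c e t = 0 := eq_zero_of_tmul_eq_zero_right hpc hp
    obtain ⟨φ, hφ⟩ := exists_dual_ne_zero_at (K := K) hp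
    set f : Module.Dual K V := (φ p)⁻¹ • φ with hf
    have hfp : f p = 1 := by simp [hf, inv_mul_cancel₀ hφ]
    set s : V := c f t with hs
    have hιpt : ExteriorAlgebra.ι K p * (t : ExteriorAlgebra K V) = 0 := by
      rw [← coe_w, hwpt, Submodule.coe_zero]
    have h3 : CliffordAlgebra.contractLeft (Q := (0 : QuadraticForm K V)) f
        (ExteriorAlgebra.ι K p * (t : ExteriorAlgebra K V)) =
        f p • (t : ExteriorAlgebra K V) -
          ExteriorAlgebra.ι K p *
            CliffordAlgebra.contractLeft (Q := (0 : QuadraticForm K V)) f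
              (t : ExteriorAlgebra K V) :=
      CliffordAlgebra.contractLeft_ι_mul f p _
    rw [hιpt, map_zero, hfp, one_smul, ← coe_c] at h3
    have hts : (t : ExteriorAlgebra K V) =
        ExteriorAlgebra.ι K p * ExteriorAlgebra.ι K s :=
      sub_eq_zero.mp h3.symm
    have ht2 : t = wedge2 K V p s := Subtype.ext (by rw [coe_wedge2]; exact hts)
    have hLI : LinearIndependent K ![p, s] := by
      rw [LinearIndependent.pair_iff' hp]
      intro a hsa
      apply ht
      apply Subtype.ext
      rw [Submodule.coe_zero, hts, ← hsa, map_smul, mul_smul_comm,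
        ExteriorAlgebra.ι_sq_zero, smul_zero]
    have hes : e p • s - e s • p = 0 := by
      rw [← hc e p s, ← ht2, hcet]
    obtain ⟨h1', h2'⟩ := LinearIndependent.pair_iff.mp hLI (-(e s)) (e p)
      (by rw [neg_smul, add_comm, ← sub_eq_add_neg]; exact hes)
    have hep : e p = 0 := h2'
    have hesz : e s = 0 := neg_eq_zero.mp h1'
    have hln2 : Module.finrank K (Submodule.span K {p, s}) = 2 := by
      have hr : Set.range ![p, s] = {p, s} := by
        simp [Matrix.range_cons, Matrix.range_empty]
        all_goals exact Set.pair_comm _ _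
      have hcard := finrank_span_eq_card hLI
      rw [hr] at hcard
      simpa [Set.finrank] using hcard
    refine ⟨⟨Submodule.span K {p}, Submodule.span K {p, s}, LinearMap.ker e,
      finrank_span_singleton hp, hln2, finrank_ker_of_ne_zero hV he,
      Submodule.span_mono (Set.singleton_subset_iff.mpr (Set.mem_insert p {s})), ?_⟩,
      p, p, s, e, rfl, rfl, rfl, by rw [ht2]⟩
    · rw [Submodule.span_le]
      rintro x (rfl | rfl)
      · exact hep
      · exact hesz
  -- forward direction: a flag rep gives a Segre point in the linear subspace
  have hrep : ∀ (Φ : ProjFlag K V) (x : Submodule K (FlagTensor K V)), IsFlagRep K V Φ x →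
      ∃ (p : V) (t : ⋀[K]^2 V) (e : Module.Dual K V), p ≠ 0 ∧ t ≠ 0 ∧ e ≠ 0 ∧
        x = Submodule.span K {p ⊗ₜ[K] t ⊗ₜ[K] e} ∧
        p ⊗ₜ[K] t ⊗ₜ[K] e ∈ LinearMap.ker i01 ⊓ LinearMap.ker i12 := by
    rintro Φ x ⟨p, q, r, e, hpt, hln, hpl, rfl⟩
    have hp : p ≠ 0 := by
      rintro rfl
      rw [Submodule.span_zero_singleton] at hpt
      have h := Φ.finrank_pt
      rw [← hpt, finrank_bot] at h
      exact absurd h (by norm_num)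
    have he : e ≠ 0 := by
      rintro rfl
      rw [LinearMap.ker_zero] at hpl
      have h := Φ.finrank_pl
      rw [← hpl, finrank_top, hV] at h
      exact absurd h (by norm_num)
    have hLIqr : LinearIndependent K ![q, r] := by
      rw [linearIndependent_iff_card_eq_finrank_span]
      have hr : Set.range ![q, r] = {q, r} := by
        simp [Matrix.range_cons, Matrix.range_empty]
        all_goals exact Set.pair_comm _ _
      rw [hr]
      show 2 = Module.finrank K (Submodule.span K {q, r})
      rw [hln, Φ.finrank_ln]
    have hq : q ≠ 0 := by
      have := hLIqr.ne_zero 0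
      simpa using this
    have ht : wedge2 K V q r ≠ 0 := by
      intro h0
      obtain ⟨φ, hφ⟩ := exists_dual_ne_zero_at (K := K) hq
      have hc0 := hc φ q r
      rw [h0, map_zero] at hc0
      have hr0 : r = ((φ q)⁻¹ * φ r) • q := by
        have h4 : φ q • r = φ r • q := by
          have := hc0.symm
          rwa [sub_eq_zero] at this
        rw [mul_smul, ← h4, ← mul_smul, inv_mul_cancel₀ hφ, one_smul]
      exact (LinearIndependent.pair_iff' hq).mp hLIqr ((φ q)⁻¹ * φ r) hr0.symm
    have hpln : p ∈ Submodule.span K {q, r} := by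
      rw [hln]
      exact Φ.pt_le_ln (hpt ▸ Submodule.mem_span_singleton_self p)
    obtain ⟨a, b, hab⟩ := Submodule.mem_span_pair.mp hpln
    have hw3 : wedge3 K V p q r = 0 := by
      have hanti : ExteriorAlgebra.ι K q * ExteriorAlgebra.ι K r =
          -(ExteriorAlgebra.ι K r * ExteriorAlgebra.ι K q) :=
        eq_neg_of_add_eq_zero_left (ExteriorAlgebra.ι_add_mul_swap q r)
      have hcoe : (wedge3 K V p q r : ExteriorAlgebra K V) = 0 := by
        rw [coe_wedge3, ← hab, map_add, map_smul, map_smul, add_mul,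
          smul_mul_assoc, smul_mul_assoc, ← mul_assoc,
          ExteriorAlgebra.ι_sq_zero, zero_mul, smul_zero, zero_add,
          hanti, mul_neg, ← mul_assoc, ExteriorAlgebra.ι_sq_zero, zero_mul,
          neg_zero, smul_zero]
      exact (ZeroMemClass.coe_eq_zero).mp hcoe
    have heq : e q = 0 := by
      have hqm : q ∈ LinearMap.ker e := by
        rw [hpl]
        exact Φ.ln_le_pl (hln ▸ Submodule.subset_span (Set.mem_insert q {r}))
      exact hqm
    have her : e r = 0 := by
      have hrm : r ∈ LinearMap.ker e := by
        rw [hpl]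
        exact Φ.ln_le_pl
          (hln ▸ Submodule.subset_span (Set.mem_insert_of_mem q rfl))
      exact hrm
    refine ⟨p, wedge2 K V q r, e, hp, ht, he, rfl, Submodule.mem_inf.mpr ⟨?_, ?_⟩⟩
    · rw [LinearMap.mem_ker, hi01, hw, hw3, TensorProduct.zero_tmul]
    · rw [LinearMap.mem_ker, hi12, hc, heq, her, zero_smul, zero_smul, sub_zero,
        TensorProduct.tmul_zero]
  constructor
  · intro p t e hp ht he
    constructor
    · rintro ⟨Φ, hrepx⟩
      obtain ⟨p', t', e', _, _, _, hx, hker⟩ := hrep Φ _ hrepx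
      have hmem : p ⊗ₜ[K] t ⊗ₜ[K] e ∈
          Submodule.span K {p' ⊗ₜ[K] t' ⊗ₜ[K] e'} := by
        rw [← hx]
        exact Submodule.mem_span_singleton_self _
      exact Submodule.span_le.mpr (Set.singleton_subset_iff.mpr hker) hmem
    · exact hback p t e hp ht he
  · ext x
    simp only [Set.mem_setOf_eq]
    constructor
    · rintro ⟨Φ, hrepx⟩
      obtain ⟨p, t, e, hp, ht, he, hx, hker⟩ := hrep Φ x hrepx
      exact ⟨⟨p, t, e, hp, ht, he, hx⟩,
        by rw [hx]; exact Submodule.span_le.mpr (Set.singleton_subset_iff.mpr hker)⟩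
    · rintro ⟨⟨p, t, e, hp, ht, he, rfl⟩, hle⟩
      exact hback p t e hp ht he (hle (Submodule.mem_span_singleton_self _))
end

section
/- The linear map i₀₁ : Ṽ → Λ³V ⊗ V* is surjective; consequently its kernel I₀₁ = ker i₀₁ has finrank 80. -/
open TensorProduct

variable (K V : Type*) [Field K] [AddCommGroup V] [Module K V]

/-!
Every decomposable `v₀ ∧ v₁ ∧ v₂` is the wedge of `v₀` with `v₁ ∧ v₂`, and decomposable
elements span `Λ³V`; so the wedge `V ⊗ Λ²V → Λ³V` is onto, and `i₀₁` is this map tensored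
with `V*`, hence onto as well. Rank–nullity then gives
`dim ker i₀₁ = 4 · 6 · 4 − 4 · 4 = 80`, using `dim ΛᵏV = (4 choose k)`.
-/

theorem exteriorPower.lift_surjective_of_apply_ιMulti {R M : Type*} [CommRing R]
    [AddCommGroup M] [Module R M] {m : ℕ} (w : M →ₗ[R] ⋀[R]^m M →ₗ[R] ⋀[R]^(m + 1) M)
    (hw : ∀ p v, w p (ιMulti R m v) = ιMulti R (m + 1) (Fin.cons p v)) :
    Function.Surjective (TensorProduct.lift w) := by
  rw [← LinearMap.range_eq_top, eq_top_iff, ← ιMulti_span, Submodule.span_le]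
  rintro _ ⟨v, rfl⟩
  exact ⟨v 0 ⊗ₜ ιMulti R m (Fin.tail v), by simp [hw]⟩

theorem TensorProduct.eq_rTensor_lift {R M N P Q : Type*} [CommSemiring R] [AddCommMonoid M]
    [Module R M] [AddCommMonoid N] [Module R N] [AddCommMonoid P] [Module R P]
    [AddCommMonoid Q] [Module R Q] {f : M →ₗ[R] N →ₗ[R] P} {g : M ⊗[R] N ⊗[R] Q →ₗ[R] P ⊗[R] Q}
    (hg : ∀ m n q, g (m ⊗ₜ n ⊗ₜ q) = f m n ⊗ₜ q) :
    g = (lift f).rTensor Q :=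
  ext_threefold fun m n q => by simp [hg]

theorem LinearMap.finrank_ker_of_surjective {F U W : Type*} [Field F] [AddCommGroup U]
    [Module F U] [AddCommGroup W] [Module F W] [FiniteDimensional F U] {f : U →ₗ[F] W}
    (hf : Function.Surjective f) :
    Module.finrank F (ker f) = Module.finrank F U - Module.finrank F W := by
  rw [← f.finrank_range_add_finrank_ker, range_eq_top.mpr hf, finrank_top,
    Nat.add_sub_cancel_left]

/-- The linear map `i₀₁ : Ṽ → Λ³V ⊗ V*`, `p ⊗ t ⊗ e* ↦ (p ∧ t) ⊗ e*`, is surjective, and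
consequently its kernel `I₀₁` has dimension `96 − 16 = 80`. Here the wedge
`V × Λ²V → Λ³V` is given as a bilinear map `w` with `w p (q ∧ r) = p ∧ q ∧ r`. -/
theorem i01_surjective_and_finrank_ker
    (hV : Module.finrank K V = 4)
    (w : V →ₗ[K] ↥(⋀[K]^2 V) →ₗ[K] ↥(⋀[K]^3 V))
    (hw : ∀ p q r : V, w p (wedge2 K V q r) = wedge3 K V p q r)
    (i01 : FlagTensor K V →ₗ[K] (↥(⋀[K]^3 V) ⊗[K] Module.Dual K V))
    (hi01 : ∀ (p : V) (t : ⋀[K]^2 V) (e : Module.Dual K V),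
      i01 (p ⊗ₜ[K] t ⊗ₜ[K] e) = (w p t) ⊗ₜ[K] e) :
    Function.Surjective i01 ∧ Module.finrank K (LinearMap.ker i01) = 80 := by
  have hw_ιMulti : ∀ p v,
      w p (exteriorPower.ιMulti K 2 v) = exteriorPower.ιMulti K 3 (Fin.cons p v) := by
    intro p v
    obtain ⟨q, r, rfl⟩ : ∃ q r, v = ![q, r] := ⟨v 0, v 1, by ext i; fin_cases i <;> rfl⟩
    exact hw p q r
  have hsurj : Function.Surjective i01 :=
    TensorProduct.eq_rTensor_lift hi01 ▸ LinearMap.rTensor_surjective _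
      (exteriorPower.lift_surjective_of_apply_ιMulti w hw_ιMulti)
  have : Module.Finite K V := Module.finite_of_finrank_eq_succ hV
  refine ⟨hsurj, ?_⟩
  rw [LinearMap.finrank_ker_of_surjective hsurj]
  simp only [Module.finrank_tensorProduct, exteriorPower.finrank_eq, Subspace.dual_finrank_eq, hV]
  rfl
end

section
/- The linear map i₁₂ : Ṽ → V ⊗ V is surjective; consequently its kernel I₁₂ = ker i₁₂ has finrank 80. -/
/-!
Given `r ∈ V`, pick `e ∈ V*` and `q ∈ V` with `e r = 0` and `e q = 1` (possible as soon as
`dim V ≥ 2`). Then `c_e (q ∧ r) = r`, so `i₁₂ (p ⊗ (q ∧ r) ⊗ e) = p ⊗ r` and `i₁₂` hits every pure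
tensor. Since `dim Ṽ = 4 · binom(4,2) · 4 = 96`, rank–nullity gives `dim I₁₂ = 96 − 16 = 80`.
-/

open TensorProduct

variable (K V : Type*) [Field K] [AddCommGroup V] [Module K V]

section

open Module

variable {K V}

theorem exists_dual_apply_eq_zero_and_apply_eq_one (hV : 1 < finrank K V) (y : V) :
    ∃ (e : Dual K V) (q : V), e y = 0 ∧ e q = 1 := by
  have : FiniteDimensional K V := Module.finite_of_finrank_pos (by omega)
  have hy : K ∙ y < ⊤ := by
    refine lt_top_iff_ne_top.2 fun h => ?_
    have := finrank_span_le_card (R := K) ({y} : Set V)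
    rw [h, finrank_top, Set.toFinset_singleton, Finset.card_singleton] at this
    omega
  obtain ⟨q, -, hq⟩ := SetLike.exists_of_lt hy
  obtain ⟨f, hfq, hf⟩ := Submodule.exists_dual_map_eq_bot_of_notMem hq inferInstance
  refine ⟨(f q)⁻¹ • f, q, ?_, inv_mul_cancel₀ hfq⟩
  have hfy : f y ∈ (K ∙ y).map f :=
    Submodule.mem_map_of_mem (Submodule.mem_span_singleton_self y)
  rw [hf, Submodule.mem_bot] at hfy
  simp [hfy]

theorem surjective_of_tmul_contraction (hV : 1 < finrank K V)
    (c : Dual K V → (⋀[K]^2 V →ₗ[K] V))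
    (hc : ∀ (e : Dual K V) (q r : V), c e (wedge2 K V q r) = e q • r - e r • q)
    (i12 : FlagTensor K V →ₗ[K] (V ⊗[K] V))
    (hi12 : ∀ (p : V) (t : ⋀[K]^2 V) (e : Dual K V), i12 (p ⊗ₜ t ⊗ₜ e) = p ⊗ₜ c e t) :
    Function.Surjective i12 := by
  rw [← LinearMap.range_eq_top, eq_top_iff, ← span_tmul_eq_top K V V, Submodule.span_le]
  rintro _ ⟨p, r, rfl⟩
  obtain ⟨e, q, her, heq⟩ := exists_dual_apply_eq_zero_and_apply_eq_one hV r
  refine ⟨p ⊗ₜ wedge2 K V q r ⊗ₜ e, ?_⟩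
  rw [hi12, hc, her, heq, zero_smul, one_smul, sub_zero]

theorem finrank_flagTensor [FiniteDimensional K V] :
    finrank K (FlagTensor K V) = finrank K V * (finrank K V).choose 2 * finrank K V := by
  rw [finrank_tensorProduct, finrank_tensorProduct, exteriorPower.finrank_eq,
    Subspace.dual_finrank_eq, mul_assoc]

theorem finrank_ker_add_finrank_of_surjective {W : Type*} [AddCommGroup W] [Module K W]
    [FiniteDimensional K V] {f : V →ₗ[K] W} (hf : Function.Surjective f) :
    finrank K (LinearMap.ker f) + finrank K W = finrank K V := by
  rw [← f.finrank_range_add_finrank_ker, LinearMap.range_eq_top.2 hf, finrank_top, add_comm]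

end

/-- The linear map `i₁₂ : Ṽ → V ⊗ V`, `p ⊗ t ⊗ e* ↦ p ⊗ (t ⌟ e*)`, is surjective, and
consequently its kernel `I₁₂` has dimension `96 − 16 = 80`. Here the contraction by `e*`
is given as a linear map `c e*` with `c e* (q ∧ r) = e*(q)·r − e*(r)·q`. -/
theorem i12_surjective_and_finrank_ker
    (hV : Module.finrank K V = 4)
    (c : Module.Dual K V → (↥(⋀[K]^2 V) →ₗ[K] V))
    (hc : ∀ (e : Module.Dual K V) (q r : V),
      c e (wedge2 K V q r) = e q • r - e r • q)
    (i12 : FlagTensor K V →ₗ[K] (V ⊗[K] V))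
    (hi12 : ∀ (p : V) (t : ⋀[K]^2 V) (e : Module.Dual K V),
      i12 (p ⊗ₜ[K] t ⊗ₜ[K] e) = p ⊗ₜ[K] (c e t)) :
    Function.Surjective i12 ∧ Module.finrank K (LinearMap.ker i12) = 80 := by
  have : FiniteDimensional K V := Module.finite_of_finrank_pos (by omega)
  have hsurj := surjective_of_tmul_contraction (by omega) c hc i12 hi12
  refine ⟨hsurj, ?_⟩
  have hrank := finrank_ker_add_finrank_of_surjective hsurj
  rw [finrank_flagTensor, Module.finrank_tensorProduct, hV,
    show (4 : ℕ).choose 2 = 6 from rfl] at hrank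
  omega
end

section
/- The kernels of i₀₁ and i₁₂ together span Ṽ, i.e. ker i₀₁ ⊔ ker i₁₂ = Ṽ; consequently finrank (ker i₀₁ ⊓ ker i₁₂) = 64, so the flag variety is contained in a 63-dimensional projective subspace of the 95-dimensional projective space on Ṽ. -/
open TensorProduct

variable (K V : Type*) [Field K] [AddCommGroup V] [Module K V]

/-!
The map `i₀₁` is onto, since `Λ³V ⊗ V*` is spanned by the tensors
`(p ∧ q ∧ r) ⊗ e* = i₀₁(p ⊗ (q ∧ r) ⊗ e*)`. The tensors `p ⊗ (p ∧ q) ⊗ e*` lie in `ker i₀₁`,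
and `i₁₂` sends them to `p ⊗ (e*(p) q - e*(q) p)`; once `dim V ≥ 2` these span `V ⊗ V`, so `i₁₂`
maps `ker i₀₁` onto `V ⊗ V`, which says exactly that `ker i₀₁ + ker i₁₂ = Ṽ`. Both maps are then
onto 16-dimensional spaces, so the intersection of their kernels has dimension
`96 - 16 - 16 = 64`.
-/

open Module

section

variable {R M N P : Type*} [Ring R] [AddCommGroup M] [Module R M] [AddCommGroup N] [Module R N]
  [AddCommGroup P] [Module R P]

theorem LinearMap.ker_sup_ker_eq_top_of_map_ker_eq_top {f : M →ₗ[R] N} {g : M →ₗ[R] P}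
    (h : (LinearMap.ker f).map g = ⊤) : LinearMap.ker f ⊔ LinearMap.ker g = ⊤ := by
  rw [← Submodule.comap_map_eq, h, Submodule.comap_top]

end

section

variable {R M N P : Type*} [CommRing R] [AddCommGroup M] [Module R M] [AddCommGroup N]
  [Module R N] [AddCommGroup P] [Module R P]

theorem LinearMap.range_eq_top_of_tmul_mem_range {s : Set M} (hs : Submodule.span R s = ⊤)
    {f : P →ₗ[R] M ⊗[R] N} (h : ∀ m ∈ s, ∀ n, m ⊗ₜ n ∈ LinearMap.range f) :
    LinearMap.range f = ⊤ := by
  rw [eq_top_iff, ← TensorProduct.map₂_mk_top_top_eq_top, ← hs, ← Submodule.span_univ,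
    Submodule.map₂_span_span, Submodule.span_le]
  rintro _ ⟨m, hm, n, -, rfl⟩
  exact h m hm n

end

section

variable {K V} {M N P : Type*} [AddCommGroup M] [Module K M] [AddCommGroup N] [Module K N]
  [AddCommGroup P] [Module K P]

theorem LinearMap.finrank_ker_inf_ker_add_add [FiniteDimensional K M] {f : M →ₗ[K] N}
    {g : M →ₗ[K] P} (hf : LinearMap.range f = ⊤) (hg : LinearMap.range g = ⊤)
    (hfg : LinearMap.ker f ⊔ LinearMap.ker g = ⊤) :
    finrank K ↥(LinearMap.ker f ⊓ LinearMap.ker g) + finrank K N + finrank K P =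
      finrank K M := by
  have hsup := Submodule.finrank_sup_add_finrank_inf_eq (LinearMap.ker f) (LinearMap.ker g)
  have hf' := f.finrank_range_add_finrank_ker
  have hg' := g.finrank_range_add_finrank_ker
  rw [hfg, finrank_top] at hsup
  rw [hf, finrank_top] at hf'
  rw [hg, finrank_top] at hg'
  omega

theorem Submodule.eq_top_of_forall_tmul_smul_sub_smul_mem (hV : 1 < finrank K V)
    {S : Submodule K (V ⊗[K] V)} (hS : ∀ (p q : V) (e : Dual K V), p ⊗ₜ (e p • q - e q • p) ∈ S) :
    S = ⊤ := by
  rw [eq_top_iff, ← TensorProduct.span_tmul_eq_top, Submodule.span_le]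
  rintro _ ⟨p, x, rfl⟩
  rcases eq_or_ne p 0 with rfl | hp
  · simp
  have hpp : p ⊗ₜ p ∈ S := by
    have hspan : (K ∙ p) ≠ ⊤ := fun h => by
      have := finrank_span_singleton (K := K) hp
      rw [h, finrank_top] at this
      omega
    obtain ⟨r, -, hr⟩ := SetLike.exists_of_lt (lt_top_iff_ne_top.2 hspan)
    obtain ⟨e, her, hpe⟩ := Submodule.exists_le_ker_of_notMem hr
    have hep : e p = 0 := hpe (Submodule.mem_span_singleton_self p)
    have := hS p r e
    rwa [hep, zero_smul, zero_sub, TensorProduct.tmul_neg, TensorProduct.tmul_smul, neg_mem_iff,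
      Submodule.smul_mem_iff _ her] at this
  obtain ⟨e, hep, -⟩ :=
    Submodule.exists_le_ker_of_notMem (p := (⊥ : Submodule K V)) (by simpa using hp)
  have hx : e p • (p ⊗ₜ[K] x) = p ⊗ₜ (e p • x - e x • p) + e x • p ⊗ₜ p := by
    rw [TensorProduct.tmul_sub, TensorProduct.tmul_smul, TensorProduct.tmul_smul, sub_add_cancel]
  rw [SetLike.mem_coe, ← Submodule.smul_mem_iff _ hep, hx]
  exact add_mem (hS p x e) (Submodule.smul_mem _ _ hpp)

theorem wedge3_eq_ιMulti (v : Fin 3 → V) :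
    exteriorPower.ιMulti K 3 v = wedge3 K V (v 0) (v 1) (v 2) := by
  have : v = ![v 0, v 1, v 2] := by ext i; fin_cases i <;> rfl
  conv_lhs => rw [this]
  rfl

theorem wedge3_self (p r : V) : wedge3 K V p p r = 0 :=
  Subtype.ext <| (ExteriorAlgebra.ιMulti K 3).map_eq_zero_of_eq ![p, p, r]
    (i := 0) (j := 1) rfl (by decide)

theorem range_eq_top_of_apply_tmul_eq_wedge3_tmul
    {w : V →ₗ[K] ↥(⋀[K]^2 V) →ₗ[K] ↥(⋀[K]^3 V)}
    (hw : ∀ p q r : V, w p (wedge2 K V q r) = wedge3 K V p q r)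
    {i01 : FlagTensor K V →ₗ[K] (↥(⋀[K]^3 V) ⊗[K] Module.Dual K V)}
    (hi01 : ∀ (p : V) (t : ⋀[K]^2 V) (e : Module.Dual K V),
      i01 (p ⊗ₜ[K] t ⊗ₜ[K] e) = (w p t) ⊗ₜ[K] e) :
    LinearMap.range i01 = ⊤ := by
  refine LinearMap.range_eq_top_of_tmul_mem_range (exteriorPower.ιMulti_span K 3 V) ?_
  rintro _ ⟨v, rfl⟩ e
  exact ⟨v 0 ⊗ₜ wedge2 K V (v 1) (v 2) ⊗ₜ e, by rw [hi01, hw, wedge3_eq_ιMulti]⟩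

end

/-- The kernels of `i₀₁` and `i₁₂` together span `Ṽ`; consequently their intersection has
dimension `80 + 80 − 96 = 64`, so the flag variety lies in a 63-dimensional projective
subspace of the 95-dimensional projective space on `Ṽ`. -/
theorem ker_i01_sup_ker_i12_eq_top_and_finrank_inf
    (hV : Module.finrank K V = 4)
    (w : V →ₗ[K] ↥(⋀[K]^2 V) →ₗ[K] ↥(⋀[K]^3 V))
    (hw : ∀ p q r : V, w p (wedge2 K V q r) = wedge3 K V p q r)
    (i01 : FlagTensor K V →ₗ[K] (↥(⋀[K]^3 V) ⊗[K] Module.Dual K V))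
    (hi01 : ∀ (p : V) (t : ⋀[K]^2 V) (e : Module.Dual K V),
      i01 (p ⊗ₜ[K] t ⊗ₜ[K] e) = (w p t) ⊗ₜ[K] e)
    (c : Module.Dual K V → (↥(⋀[K]^2 V) →ₗ[K] V))
    (hc : ∀ (e : Module.Dual K V) (q r : V),
      c e (wedge2 K V q r) = e q • r - e r • q)
    (i12 : FlagTensor K V →ₗ[K] (V ⊗[K] V))
    (hi12 : ∀ (p : V) (t : ⋀[K]^2 V) (e : Module.Dual K V),
      i12 (p ⊗ₜ[K] t ⊗ₜ[K] e) = p ⊗ₜ[K] (c e t)) :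
    LinearMap.ker i01 ⊔ LinearMap.ker i12 = ⊤ ∧
    Module.finrank K (LinearMap.ker i01 ⊓ LinearMap.ker i12 :
      Submodule K (FlagTensor K V)) = 64 := by
  have : FiniteDimensional K V := Module.finite_of_finrank_eq_succ hV
  have hmap : (LinearMap.ker i01).map i12 = ⊤ :=
    Submodule.eq_top_of_forall_tmul_smul_sub_smul_mem (by omega) fun p q e =>
      ⟨p ⊗ₜ wedge2 K V p q ⊗ₜ e, by simp [hi01, hw, wedge3_self], by rw [hi12, hc]⟩
  have hsup := LinearMap.ker_sup_ker_eq_top_of_map_ker_eq_top hmap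
  refine ⟨hsup, ?_⟩
  have hcount := LinearMap.finrank_ker_inf_ker_add_add
    (range_eq_top_of_apply_tmul_eq_wedge3_tmul hw hi01)
    (eq_top_mono LinearMap.map_le_range hmap) hsup
  simp only [finrank_tensorProduct, exteriorPower.finrank_eq, Subspace.dual_finrank_eq, hV,
    show Nat.choose 4 2 = 6 from rfl, show Nat.choose 4 3 = 4 from rfl] at hcount
  omega
end

section
/- The flag space (F, ∼) is connected: for any two flags Φ, Ψ ∈ F there exist n ∈ ℕ and flags Φ = Φ₀, Φ₁, …, Φₙ = Ψ such that Φᵢ ∼ Φᵢ₊₁ for all 0 ≤ i < n. -/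
variable {K V : Type*} [DivisionRing K] [AddCommGroup V] [Module K V]

section Aux

open Module Relation

private lemma projflag_exists_dim_succ [FiniteDimensional K V] (N : Submodule K V)
    (h : finrank K N < finrank K V) :
    ∃ N' : Submodule K V, N ≤ N' ∧ finrank K N' = finrank K N + 1 := by
  obtain ⟨m, hm⟩ := N.exists_of_finrank_lt h
  have hm0 : m ≠ 0 := by
    intro h0
    exact hm 1 one_ne_zero (by simp [h0])
  refine ⟨N ⊔ K ∙ m, le_sup_left, ?_⟩
  have hinf : N ⊓ (K ∙ m) = ⊥ := by
    rw [eq_bot_iff]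
    rintro x ⟨hxN, hxm⟩
    obtain ⟨r, rfl⟩ := Submodule.mem_span_singleton.mp hxm
    rcases eq_or_ne r 0 with rfl | hr
    · simp
    · exact absurd hxN (hm r hr)
  have heq := Submodule.finrank_sup_add_finrank_inf_eq N (K ∙ m)
  rw [hinf, finrank_bot, finrank_span_singleton hm0, add_zero] at heq
  exact heq

private lemma projflag_rtg_of_ln_eq (Φ Ψ : ProjFlag K V) (h : Φ.ln = Ψ.ln) :
    ReflTransGen ProjFlag.Related Φ Ψ := by
  exact ReflTransGen.head
    (b := ⟨Φ.pt, Φ.ln, Ψ.pl, Φ.finrank_pt, Φ.finrank_ln, Ψ.finrank_pl, Φ.pt_le_ln,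
      h ▸ Ψ.ln_le_pl⟩)
    (Or.inl ⟨rfl, rfl⟩) (ReflTransGen.single (Or.inr (Or.inr ⟨h, rfl⟩)))

private lemma projflag_rtg_of_inf_ln [FiniteDimensional K V] (Φ Ψ : ProjFlag K V)
    (h1 : finrank K ↥(Φ.ln ⊓ Ψ.ln) = 1) :
    ReflTransGen ProjFlag.Related Φ Ψ := by
  have hsup : finrank K ↥(Φ.ln ⊔ Ψ.ln) = 3 := by
    have := Submodule.finrank_sup_add_finrank_inf_eq Φ.ln Ψ.ln
    rw [h1, Φ.finrank_ln, Ψ.finrank_ln] at this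
    omega
  set Φ₁ : ProjFlag K V :=
    ⟨Φ.ln ⊓ Ψ.ln, Φ.ln, Φ.ln ⊔ Ψ.ln, h1, Φ.finrank_ln, hsup, inf_le_left, le_sup_left⟩
  set Φ₂ : ProjFlag K V :=
    ⟨Φ.ln ⊓ Ψ.ln, Ψ.ln, Φ.ln ⊔ Ψ.ln, h1, Ψ.finrank_ln, hsup, inf_le_right, le_sup_right⟩
  exact ((projflag_rtg_of_ln_eq Φ Φ₁ rfl).trans
    (ReflTransGen.single (show ProjFlag.Related Φ₁ Φ₂ from Or.inr (Or.inl ⟨rfl, rfl⟩)))).trans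
    (projflag_rtg_of_ln_eq Φ₂ Ψ rfl)

private lemma projflag_rtg (hV : Module.finrank K V = 4) (Φ Ψ : ProjFlag K V) :
    ReflTransGen ProjFlag.Related Φ Ψ := by
  have : FiniteDimensional K V := .of_finrank_pos (by omega)
  rcases eq_or_ne Φ.ln Ψ.ln with heq | hne
  · exact projflag_rtg_of_ln_eq Φ Ψ heq
  have hle2 : finrank K ↥(Φ.ln ⊓ Ψ.ln) ≤ 2 :=
    Φ.finrank_ln ▸ Submodule.finrank_mono inf_le_left
  have hne2 : finrank K ↥(Φ.ln ⊓ Ψ.ln) ≠ 2 := by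
    intro h2
    have : Φ.ln ⊓ Ψ.ln = Φ.ln :=
      Submodule.eq_of_le_of_finrank_eq inf_le_left (by rw [h2, Φ.finrank_ln])
    have hle : Φ.ln ≤ Ψ.ln := this ▸ inf_le_right
    exact hne (Submodule.eq_of_le_of_finrank_eq hle
      (by rw [Φ.finrank_ln, Ψ.finrank_ln]))
  rcases Nat.lt_or_ge (finrank K ↥(Φ.ln ⊓ Ψ.ln)) 1 with h0 | h1
  · -- lines are disjoint
    have hbot : Φ.ln ⊓ Ψ.ln = ⊥ :=
      Submodule.finrank_eq_zero.mp (by omega)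
    have hptbot : Φ.pt ⊓ Ψ.pt = ⊥ := by
      rw [eq_bot_iff, ← hbot]
      exact inf_le_inf Φ.pt_le_ln Ψ.pt_le_ln
    have hg'' : finrank K ↥(Φ.pt ⊔ Ψ.pt) = 2 := by
      have := Submodule.finrank_sup_add_finrank_inf_eq Φ.pt Ψ.pt
      rw [hptbot, finrank_bot, Φ.finrank_pt, Ψ.finrank_pt, add_zero] at this
      omega
    obtain ⟨ε₃, hgε, hε₃⟩ := projflag_exists_dim_succ (Φ.pt ⊔ Ψ.pt) (by omega)
    rw [hg''] at hε₃
    -- intermediate flag with line Φ.pt ⊔ Ψ.pt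
    set Φ₃ : ProjFlag K V :=
      ⟨Φ.pt, Φ.pt ⊔ Ψ.pt, ε₃, Φ.finrank_pt, hg'', hε₃, le_sup_left, hgε⟩
    have dim1 : ∀ (Χ Χ' : ProjFlag K V), Χ'.pt ≤ Χ.ln → Χ.ln ≠ Χ'.ln →
        finrank K ↥(Χ.ln ⊓ Χ'.ln) = 1 := by
      intro Χ Χ' hP hneq
      have hge : 1 ≤ finrank K ↥(Χ.ln ⊓ Χ'.ln) := by
        rw [← Χ'.finrank_pt]
        exact Submodule.finrank_mono (le_inf hP Χ'.pt_le_ln)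
      have hle : finrank K ↥(Χ.ln ⊓ Χ'.ln) ≤ 2 :=
        Χ.finrank_ln ▸ Submodule.finrank_mono inf_le_left
      have hne2' : finrank K ↥(Χ.ln ⊓ Χ'.ln) ≠ 2 := by
        intro h2
        have : Χ.ln ⊓ Χ'.ln = Χ.ln :=
          Submodule.eq_of_le_of_finrank_eq inf_le_left (by rw [h2, Χ.finrank_ln])
        have hle' : Χ.ln ≤ Χ'.ln := this ▸ inf_le_right
        exact hneq (Submodule.eq_of_le_of_finrank_eq hle'
          (by rw [Χ.finrank_ln, Χ'.finrank_ln]))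
      omega
    have hne₁ : Φ.ln ≠ Φ₃.ln := by
      intro h
      have hb : Ψ.pt ≤ Φ.ln ⊓ Ψ.ln := le_inf (h ▸ (le_sup_right : Ψ.pt ≤ Φ₃.ln)) Ψ.pt_le_ln
      rw [hbot, le_bot_iff] at hb
      have hfr := Ψ.finrank_pt
      rw [hb, finrank_bot] at hfr
      omega
    have hne₂ : Φ₃.ln ≠ Ψ.ln := by
      intro h
      have hb : Φ.pt ≤ Φ.ln ⊓ Ψ.ln := le_inf Φ.pt_le_ln (h ▸ (le_sup_left : Φ.pt ≤ Φ₃.ln))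
      rw [hbot, le_bot_iff] at hb
      have hfr := Φ.finrank_pt
      rw [hb, finrank_bot] at hfr
      omega
    have h13 : finrank K ↥(Φ.ln ⊓ Φ₃.ln) = 1 := dim1 Φ Φ₃ Φ.pt_le_ln hne₁
    have h32 : finrank K ↥(Φ₃.ln ⊓ Ψ.ln) = 1 := by
      have : Ψ.pt ≤ Φ₃.ln := le_sup_right
      have hge : 1 ≤ finrank K ↥(Φ₃.ln ⊓ Ψ.ln) := by
        rw [← Ψ.finrank_pt]
        exact Submodule.finrank_mono (le_inf this Ψ.pt_le_ln)
      have hle : finrank K ↥(Φ₃.ln ⊓ Ψ.ln) ≤ 2 :=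
        Φ₃.finrank_ln ▸ Submodule.finrank_mono inf_le_left
      have hne2' : finrank K ↥(Φ₃.ln ⊓ Ψ.ln) ≠ 2 := by
        intro h2
        have heq3 : Φ₃.ln ⊓ Ψ.ln = Φ₃.ln :=
          Submodule.eq_of_le_of_finrank_eq inf_le_left (by rw [h2, Φ₃.finrank_ln])
        have hle' : Φ₃.ln ≤ Ψ.ln := heq3 ▸ inf_le_right
        exact hne₂ (Submodule.eq_of_le_of_finrank_eq hle'
          (by rw [Φ₃.finrank_ln, Ψ.finrank_ln]))
      omega
    exact (projflag_rtg_of_inf_ln Φ Φ₃ h13).trans (projflag_rtg_of_inf_ln Φ₃ Ψ h32)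
  · -- intersection has dimension exactly 1
    exact projflag_rtg_of_inf_ln Φ Ψ (by omega)

private lemma projflag_chain_of_rtg {Φ Ψ : ProjFlag K V}
    (h : ReflTransGen ProjFlag.Related Φ Ψ) :
    ∃ (n : ℕ) (c : ℕ → ProjFlag K V), c 0 = Φ ∧ c n = Ψ ∧
      ∀ i < n, (c i).Related (c (i + 1)) := by
  induction h with
  | refl => exact ⟨0, fun _ => Φ, rfl, rfl, fun i hi => absurd hi (Nat.not_lt_zero i)⟩
  | @tail b c _ hbc ih =>
    obtain ⟨n, f, hf0, hfn, hrel⟩ := ih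
    refine ⟨n + 1, fun i => if i ≤ n then f i else c, by simp [hf0], by simp, ?_⟩
    intro i hi
    rcases Nat.lt_or_ge i n with h' | h'
    · simpa [Nat.le_of_lt h', Nat.succ_le_of_lt h'] using hrel i h'
    · have hin : i = n := by omega
      subst hin
      simpa [hfn] using hbc

end Aux

/-- The flag space `(F, ∼)` is connected: any two flags can be joined by a finite chain
of consecutively related flags. -/
theorem flagSpace_connected
    (hV : Module.finrank K V = 4) (Φ Ψ : ProjFlag K V) :
    ∃ (n : ℕ) (c : ℕ → ProjFlag K V), c 0 = Φ ∧ c n = Ψ ∧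
      ∀ i < n, (c i).Related (c (i + 1)) := by
  exact projflag_chain_of_rtg (projflag_rtg hV Φ Ψ)
end

section
/- The map φ from the set of flags to the set of 1-dimensional subspaces of Ṽ is injective: if Φ and Ψ are flags with φ(Φ) = φ(Ψ), then Φ = Ψ. -/
open TensorProduct

variable (K V : Type*) [Field K] [AddCommGroup V] [Module K V]

/-! A nonzero elementary tensor `a ⊗ b` lies on the line through `a' ⊗ b'` only if `a ∈ K a'` and
`b ∈ K b'`: a linear form killing `a'` but not `a` would otherwise kill `a ⊗ b`. Applied twice
to `p ⊗ (q ∧ r) ⊗ e*`, this pins down `p` and `e*` up to scalars, hence the point and the plane,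
and `q ∧ r` up to a scalar, which recovers the line as `{v | v ∧ q ∧ r = 0}`. Comparing the
representatives of the two flags in both directions gives the reverse inclusions. -/

open Module ExteriorAlgebra

section Tensor

variable {K} {M N : Type*} [AddCommGroup M] [AddCommGroup N] [Module K M] [Module K N]

theorem TensorProduct.mem_span_singleton_of_tmul_mem_span_singleton_left
    {a a' : M} {b b' : N} (hb : b ≠ 0) (h : a ⊗ₜ[K] b ∈ Submodule.span K {a' ⊗ₜ[K] b'}) :
    a ∈ Submodule.span K {a'} := by
  by_contra ha
  obtain ⟨f, hfa, hfa'⟩ := Submodule.exists_dual_map_eq_bot_of_notMem ha inferInstance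
  obtain ⟨c, hc⟩ := Submodule.mem_span_singleton.1 h
  have hfa'0 : f a' = 0 := by
    rwa [Submodule.map_span, Set.image_singleton, Submodule.span_singleton_eq_bot] at hfa'
  have : f a • b = 0 := by
    simpa [hfa'0] using congrArg (TensorProduct.lid K N ∘ LinearMap.rTensor N f) hc.symm
  exact hb ((smul_eq_zero.1 this).resolve_left hfa)

theorem TensorProduct.mem_span_singleton_of_tmul_mem_span_singleton_right
    {a a' : M} {b b' : N} (ha : a ≠ 0) (h : a ⊗ₜ[K] b ∈ Submodule.span K {a' ⊗ₜ[K] b'}) :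
    b ∈ Submodule.span K {b'} := by
  obtain ⟨c, hc⟩ := Submodule.mem_span_singleton.1 h
  refine mem_span_singleton_of_tmul_mem_span_singleton_left ha (b' := a')
    (Submodule.mem_span_singleton.2 ⟨c, ?_⟩)
  simpa using congrArg (TensorProduct.comm K M N) hc

theorem TensorProduct.tmul_ne_zero {a : M} {b : N} (ha : a ≠ 0) (hb : b ≠ 0) :
    a ⊗ₜ[K] b ≠ 0 := by
  intro h
  have : a ⊗ₜ[K] b ∈ Submodule.span K {(0 : M) ⊗ₜ[K] b} := by simp [h]
  simpa [ha] using mem_span_singleton_of_tmul_mem_span_singleton_left hb this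

end Tensor

section Exterior

variable {K} {M : Type*} [AddCommGroup M] [Module K M]

theorem ExteriorAlgebra.ιMulti_eq_zero_iff {n : ℕ} {v : Fin n → M} :
    ιMulti K n v = 0 ↔ ¬LinearIndependent K v := by
  refine ⟨fun h hv ↦ ?_, (ιMulti K n).map_linearDependent v⟩
  -- `univ` is the only `n`-subset of `Fin n`; its entry in `ιMulti_family` is `ιMulti K n v`.
  have := (exteriorPower.ιMulti_family_linearIndependent_field (n := n) hv).ne_zero
    ⟨Finset.univ, by simp⟩
  rw [ne_eq, ← Submodule.coe_eq_zero, exteriorPower.ιMulti_family_apply_coe,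
    ExteriorAlgebra.ιMulti_family, (OrderEmbedding.strictMono _).eq_id] at this
  exact this h

theorem ExteriorAlgebra.mem_span_pair_iff_ι_mul_ιMulti_eq_zero {q r : M}
    (hqr : LinearIndependent K ![q, r]) (v : M) :
    v ∈ Submodule.span K {q, r} ↔ ι K v * ιMulti K 2 ![q, r] = 0 := by
  have : ι K v * ιMulti K 2 ![q, r] = ιMulti K 3 ![v, q, r] := by
    rw [ιMulti_succ_apply]; rfl
  rw [this, ιMulti_eq_zero_iff, show ![v, q, r] = Fin.cons v ![q, r] from rfl,
    linearIndependent_finCons]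
  simp [hqr, Set.pair_comm]

end Exterior

namespace ProjFlag

variable {K V : Type*} [DivisionRing K] [AddCommGroup V] [Module K V]

theorem ext {Φ Ψ : ProjFlag K V} (hpt : Φ.pt = Ψ.pt) (hln : Φ.ln = Ψ.ln) (hpl : Φ.pl = Ψ.pl) :
    Φ = Ψ := by
  cases Φ; cases Ψ; congr

theorem ne_zero_of_span_eq_pt (Φ : ProjFlag K V) {p : V} (h : Submodule.span K {p} = Φ.pt) :
    p ≠ 0 := by
  rintro rfl
  have := Φ.finrank_pt
  rw [← h, Submodule.span_zero_singleton, finrank_bot] at this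
  exact zero_ne_one this

theorem linearIndependent_of_span_eq_ln (Φ : ProjFlag K V) {q r : V}
    (h : Submodule.span K {q, r} = Φ.ln) : LinearIndependent K ![q, r] := by
  rw [linearIndependent_iff_card_eq_finrank_span, Set.finrank, Matrix.range_cons,
    Matrix.range_cons, Matrix.range_empty, Set.union_empty, Set.singleton_union, h,
    Φ.finrank_ln, Fintype.card_fin]

theorem pl_ne_top (Φ : ProjFlag K V) (hV : finrank K V ≠ 3) : Φ.pl ≠ ⊤ := fun h ↦
  hV (by rw [← Φ.finrank_pl, h, finrank_top])

end ProjFlag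

section FlagRep

variable {K V}

theorem span_pair_le_of_wedge2_mem_span_singleton {q r q' r' : V}
    (hqr : LinearIndependent K ![q, r]) (hqr' : LinearIndependent K ![q', r'])
    (h : wedge2 K V q r ∈ Submodule.span K {wedge2 K V q' r'}) :
    Submodule.span K {q', r'} ≤ Submodule.span K {q, r} := by
  obtain ⟨c, hc⟩ := Submodule.mem_span_singleton.1 h
  intro v hv
  rw [mem_span_pair_iff_ι_mul_ιMulti_eq_zero hqr' v] at hv
  rw [mem_span_pair_iff_ι_mul_ιMulti_eq_zero hqr v]
  change ι K v * (wedge2 K V q r : ExteriorAlgebra K V) = 0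
  rw [← hc, Submodule.coe_smul, mul_smul_comm]
  exact smul_eq_zero_of_right c hv

theorem IsFlagRep.pt_le_and_ln_ge_and_pl_ge (hV : finrank K V ≠ 3) {Φ Ψ : ProjFlag K V}
    {x : Submodule K (FlagTensor K V)} (hΦ : IsFlagRep K V Φ x) (hΨ : IsFlagRep K V Ψ x) :
    Φ.pt ≤ Ψ.pt ∧ Ψ.ln ≤ Φ.ln ∧ Ψ.pl ≤ Φ.pl := by
  obtain ⟨p, q, r, e, hp, hqr, he, rfl⟩ := hΦ
  obtain ⟨p', q', r', e', hp', hqr', he', hx⟩ := hΨ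
  have hp0 : p ≠ 0 := Φ.ne_zero_of_span_eq_pt hp
  have hli := Φ.linearIndependent_of_span_eq_ln hqr
  have hw0 : wedge2 K V q r ≠ 0 := fun h ↦
    ιMulti_eq_zero_iff.1 (congrArg Subtype.val h) hli
  have he0 : e ≠ 0 := by
    rintro rfl
    exact Φ.pl_ne_top hV (he ▸ LinearMap.ker_zero)
  have hmem : p ⊗ₜ[K] wedge2 K V q r ⊗ₜ[K] e ∈
      Submodule.span K {p' ⊗ₜ[K] wedge2 K V q' r' ⊗ₜ[K] e'} :=
    hx ▸ Submodule.mem_span_singleton_self _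
  have hpw := TensorProduct.mem_span_singleton_of_tmul_mem_span_singleton_left he0 hmem
  have hee := TensorProduct.mem_span_singleton_of_tmul_mem_span_singleton_right
    (TensorProduct.tmul_ne_zero hp0 hw0) hmem
  have hpp := TensorProduct.mem_span_singleton_of_tmul_mem_span_singleton_left hw0 hpw
  have hww := TensorProduct.mem_span_singleton_of_tmul_mem_span_singleton_right hp0 hpw
  refine ⟨hp ▸ hp' ▸ (Submodule.span_singleton_le_iff_mem _ _).2 hpp, ?_, ?_⟩
  · exact hqr ▸ hqr' ▸ span_pair_le_of_wedge2_mem_span_singleton hli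
      (Ψ.linearIndependent_of_span_eq_ln hqr') hww
  · obtain ⟨c, rfl⟩ := Submodule.mem_span_singleton.1 hee
    exact he ▸ he' ▸ LinearMap.ker_le_ker_smul _ _

end FlagRep

/-- The map `φ` from flags to 1-dimensional subspaces of `Ṽ` is injective. -/
theorem flagRep_injective
    (hV : Module.finrank K V = 4)
    (Φ Ψ : ProjFlag K V) (x : Submodule K (FlagTensor K V))
    (hΦ : IsFlagRep K V Φ x) (hΨ : IsFlagRep K V Ψ x) :
    Φ = Ψ := by
  have hV3 : finrank K V ≠ 3 := by omega
  obtain ⟨hpt, hln, hpl⟩ := hΦ.pt_le_and_ln_ge_and_pl_ge hV3 hΨ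
  obtain ⟨hpt', hln', hpl'⟩ := hΨ.pt_le_and_ln_ge_and_pl_ge hV3 hΦ
  exact ProjFlag.ext (hpt.antisymm hpt') (hln'.antisymm hln) (hpl'.antisymm hpl)
end
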